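/- arXiv:2101.07233 — 8 statements merged into one kernel-verified Lean document; each statement's English description precedes it below -/
import Mathlib

section
/- For every edge e of G, the energy of e in the unit s-t electric flow satisfies r_e · f_e² ≤ min(r_e, r_e⁻¹ · 𝓔²). -/
/-!
Let `p = L† χ_st`. Since `L L†` is the orthogonal projection onto `range L = 𝟙ᗮ ∋ χ_st`, we have
`L p = χ_st`, i.e. `x t - x s = ∑ₑ rₑ⁻¹ (x (head e) - x (tail e)) (p (head e) - p (tail e))` for
every `x : V → ℝ`. Testing this with indicators of superlevel sets of `p` gives both `|fₑ| ≤ 1`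
(every edge crossing a level cut carries flow in the same direction, and the net flow across the
cut is `1`) and the maximum principle `p s ≤ p ≤ p t`, whence `|p (head e) - p (tail e)| ≤ 𝓔`.
Both bounds follow, because `rₑ fₑ² = rₑ⁻¹ (p (head e) - p (tail e))²`.
-/

open Matrix

/-- The four Penrose conditions characterizing the Moore–Penrose pseudoinverse. -/
def IsMoorePenrose {n : Type*} [Fintype n] (M Md : Matrix n n ℝ) : Prop :=
  M * Md * M = M ∧ Md * M * Md = Md ∧ (M * Md)ᵀ = M * Md ∧ (Md * M)ᵀ = Md * M

section Potential

variable {V E : Type*} {head tail : E → V} {q : E → ℝ}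

noncomputable def superlevelIndicator (p : V → ℝ) (θ : ℝ) (u : V) : ℝ :=
  if θ ≤ p u then 1 else 0

lemma superlevelIndicator_nonneg (p : V → ℝ) (θ : ℝ) (u : V) : 0 ≤ superlevelIndicator p θ u := by
  unfold superlevelIndicator
  split_ifs <;> norm_num

lemma superlevelIndicator_le_one (p : V → ℝ) (θ : ℝ) (u : V) : superlevelIndicator p θ u ≤ 1 := by
  unfold superlevelIndicator
  split_ifs <;> norm_num

lemma monotone_ite_le (θ : ℝ) : Monotone fun y : ℝ => if θ ≤ y then (1 : ℝ) else 0 := by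
  intro y z hyz
  dsimp only
  split_ifs with hy hz
  exacts [le_rfl, absurd (hy.trans hyz) hz, zero_le_one, le_rfl]

variable (head tail) in
lemma superlevel_summand_nonneg (hq : ∀ e, 0 ≤ q e) (p : V → ℝ) (θ : ℝ) (e : E) :
    0 ≤ q e * (superlevelIndicator p θ (head e) - superlevelIndicator p θ (tail e)) *
      (p (head e) - p (tail e)) := by
  rw [mul_assoc]
  exact mul_nonneg (hq e)
    (((monovary_self p).comp_monotone_left (monotone_ite_le θ)).sub_mul_sub_nonneg _ _)

variable [Fintype E]

variable (head tail q) in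
/-- The weak form of `L p = 𝟙_b - 𝟙_a` for the Laplacian `L` with edge conductances `q`. -/
def IsUnitPotential (a b : V) (p : V → ℝ) : Prop :=
  ∀ x : V → ℝ, x b - x a = ∑ e, q e * (x (head e) - x (tail e)) * (p (head e) - p (tail e))

theorem IsUnitPotential.neg {a b : V} {p : V → ℝ} (hp : IsUnitPotential head tail q a b p) :
    IsUnitPotential head tail q b a (-p) := by
  intro x
  rw [← neg_sub, hp x, ← Finset.sum_neg_distrib]
  refine Finset.sum_congr rfl fun e _ => ?_
  simp only [Pi.neg_apply]
  ring

variable {a b : V} {p : V → ℝ}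

/-- Cut the network at the level `p (head e)`. -/
theorem IsUnitPotential.flow_le_one (hp : IsUnitPotential head tail q a b p)
    (hq : ∀ e, 0 ≤ q e) (e : E) : q e * (p (head e) - p (tail e)) ≤ 1 := by
  rcases le_or_gt (p (head e)) (p (tail e)) with hle | hlt
  · exact (mul_nonpos_of_nonneg_of_nonpos (hq e) (sub_nonpos.2 hle)).trans zero_le_one
  set x := superlevelIndicator p (p (head e))
  have hx_head : x (head e) = 1 := if_pos le_rfl
  have hx_tail : x (tail e) = 0 := if_neg (not_le.2 hlt)
  calc q e * (p (head e) - p (tail e))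
      = q e * (x (head e) - x (tail e)) * (p (head e) - p (tail e)) := by
        rw [hx_head, hx_tail]; ring
    _ ≤ ∑ e', q e' * (x (head e') - x (tail e')) * (p (head e') - p (tail e')) :=
        Finset.single_le_sum (fun e' _ => superlevel_summand_nonneg head tail hq p _ e')
          (Finset.mem_univ e)
    _ = x b - x a := (hp x).symm
    _ ≤ 1 := by linarith [superlevelIndicator_le_one p (p (head e)) b,
        superlevelIndicator_nonneg p (p (head e)) a]

theorem IsUnitPotential.abs_flow_le_one (hp : IsUnitPotential head tail q a b p)
    (hq : ∀ e, 0 ≤ q e) (e : E) : |q e * (p (head e) - p (tail e))| ≤ 1 := by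
  have hneg := hp.neg.flow_le_one hq e
  simp only [Pi.neg_apply] at hneg
  exact abs_le.2 ⟨by linarith, hp.flow_le_one hq e⟩

/-- Cut the network at the level `max p`: if `p b` lay below it, no flow would cross the cut. -/
theorem IsUnitPotential.le_target [Finite V] (hp : IsUnitPotential head tail q a b p)
    (hq : ∀ e, 0 < q e)
    (hconn : ∀ x : V → ℝ, (∀ e, x (head e) = x (tail e)) → ∀ v w, x v = x w) (v : V) :
    p v ≤ p b := by
  have : Nonempty V := ⟨b⟩
  obtain ⟨m, hm⟩ := Finite.exists_max p
  refine (hm v).trans (not_lt.1 fun hlt => ?_)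
  set x := superlevelIndicator p (p m)
  have hx_m : x m = 1 := if_pos le_rfl
  have hx_b : x b = 0 := if_neg (not_le.2 hlt)
  have hsummand := superlevel_summand_nonneg head tail (fun e => (hq e).le) p (p m)
  have hsum : ∑ e, q e * (x (head e) - x (tail e)) * (p (head e) - p (tail e)) = 0 := by
    refine le_antisymm ?_ (Finset.sum_nonneg fun e _ => hsummand e)
    rw [← hp x, hx_b]
    linarith [superlevelIndicator_nonneg p (p m) a]
  have hedge : ∀ e, x (head e) = x (tail e) := by
    intro e
    rcases mul_eq_zero.1 ((Finset.sum_eq_zero_iff_of_nonneg fun e _ => hsummand e).1 hsum e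
      (Finset.mem_univ e)) with h | h
    · exact sub_eq_zero.1 ((mul_eq_zero.1 h).resolve_left (hq e).ne')
    · simp only [x, superlevelIndicator, sub_eq_zero.1 h]
  linarith [hconn x hedge m b]

theorem IsUnitPotential.source_le [Finite V] (hp : IsUnitPotential head tail q a b p)
    (hq : ∀ e, 0 < q e)
    (hconn : ∀ x : V → ℝ, (∀ e, x (head e) = x (tail e)) → ∀ v w, x v = x w) (v : V) :
    p a ≤ p v :=
  neg_le_neg_iff.1 (hp.neg.le_target hq hconn v)

theorem IsUnitPotential.abs_sub_le [Finite V] (hp : IsUnitPotential head tail q a b p)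
    (hq : ∀ e, 0 < q e)
    (hconn : ∀ x : V → ℝ, (∀ e, x (head e) = x (tail e)) → ∀ v w, x v = x w) (u w : V) :
    |p u - p w| ≤ p b - p a :=
  abs_le.2 ⟨by linarith [hp.le_target hq hconn w, hp.source_le hq hconn u],
    by linarith [hp.le_target hq hconn u, hp.source_le hq hconn w]⟩

end Potential

section Laplacian

variable {V E : Type*} [Fintype V]

lemma dotProduct_transpose_mul_diagonal_mul_mulVec [Fintype E] [DecidableEq E]
    (B : Matrix E V ℝ) (q : E → ℝ) (x y : V → ℝ) :
    x ⬝ᵥ ((Bᵀ * diagonal q * B) *ᵥ y) = ∑ e, q e * (B *ᵥ x) e * (B *ᵥ y) e := by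
  rw [← mulVec_mulVec, ← mulVec_mulVec, dotProduct_mulVec, vecMul_transpose]
  simp only [dotProduct, mulVec_diagonal]
  exact Finset.sum_congr rfl fun e _ => by ring

variable [DecidableEq V]

lemma mulVec_incidence {head tail : E → V} {B : Matrix E V ℝ}
    (hB : ∀ e v, B e v = (if v = head e then (1 : ℝ) else 0) - (if v = tail e then 1 else 0))
    (y : V → ℝ) (e : E) : (B *ᵥ y) e = y (head e) - y (tail e) := by
  simp [mulVec, dotProduct, hB, sub_mul, Finset.sum_sub_distrib]

lemma dotProduct_indicator_sub (s t : V) (y : V → ℝ) :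
    (fun v => (if v = t then (1 : ℝ) else 0) - (if v = s then 1 else 0)) ⬝ᵥ y = y t - y s := by
  simp [dotProduct, sub_mul, Finset.sum_sub_distrib]

variable [Fintype E] [DecidableEq E]

lemma transpose_mul_diagonal_mul_mulVec_eq_zero {head tail : E → V} {B : Matrix E V ℝ}
    (hB : ∀ e v, B e v = (if v = head e then (1 : ℝ) else 0) - (if v = tail e then 1 else 0))
    (q : E → ℝ) {x : V → ℝ} (hx : ∀ e, x (head e) = x (tail e)) :
    (Bᵀ * diagonal q * B) *ᵥ x = 0 := by
  have hBx : B *ᵥ x = 0 := funext fun e => by simp [mulVec_incidence hB, hx e]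
  rw [← mulVec_mulVec, hBx, mulVec_zero]

theorem isUnitPotential_of_mulVec_eq {head tail : E → V} {B : Matrix E V ℝ}
    (hB : ∀ e v, B e v = (if v = head e then (1 : ℝ) else 0) - (if v = tail e then 1 else 0))
    (q : E → ℝ) (s t : V) {p : V → ℝ}
    (hp : (Bᵀ * diagonal q * B) *ᵥ p =
      fun v => (if v = t then (1 : ℝ) else 0) - (if v = s then 1 else 0)) :
    IsUnitPotential head tail q s t p := by
  intro x
  rw [← dotProduct_indicator_sub, dotProduct_comm, ← hp,
    dotProduct_transpose_mul_diagonal_mul_mulVec]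
  simp only [mulVec_incidence hB]

end Laplacian

/-- `M Md` is the orthogonal projection onto `range M = (ker M)ᗮ = 𝟙ᗮ`. -/
theorem IsMoorePenrose.mulVec_mulVec_of_sum_eq_zero {n : Type*} [Fintype n]
    {M Md : Matrix n n ℝ} (h : IsMoorePenrose M Md) (hM : Mᵀ = M)
    (hker : ∀ x : n → ℝ, M *ᵥ x = 0 → ∀ v w, x v = x w) (h1 : M *ᵥ 1 = 0)
    {y : n → ℝ} (hy : ∑ v, y v = 0) : M *ᵥ (Md *ᵥ y) = y := by
  have hMMMd : M * M * Md = M := by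
    calc M * M * Md = Mᵀ * (M * Md)ᵀ := by rw [hM, h.2.2.1, Matrix.mul_assoc]
      _ = M := by rw [← transpose_mul, h.1, hM]
  set d := M *ᵥ (Md *ᵥ y) - y
  have hd : M *ᵥ d = 0 := by
    rw [mulVec_sub, mulVec_mulVec, mulVec_mulVec, hMMMd, sub_self]
  have hsum : ∑ v, d v = 0 := by
    have hsum_range : ∑ v, (M *ᵥ (Md *ᵥ y)) v = 0 := by
      rw [← one_dotProduct, dotProduct_mulVec, ← mulVec_transpose, hM, h1, zero_dotProduct]
    simp only [d, Pi.sub_apply, Finset.sum_sub_distrib, hsum_range, hy, sub_zero]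
  funext v
  have hcard : (Fintype.card n : ℝ) ≠ 0 := by
    have : Nonempty n := ⟨v⟩
    exact_mod_cast Fintype.card_ne_zero
  have hconst : ∑ w, d w = Fintype.card n * d v := by
    rw [Finset.sum_congr rfl fun w _ => hker d hd w v]
    simp
  exact sub_eq_zero.1 ((mul_eq_zero.1 (hconst ▸ hsum)).resolve_left hcard)

theorem energy_le_min_general {V E : Type*} [Fintype V] [Fintype E] [DecidableEq V] [DecidableEq E]
    (head tail : E → V) (s t : V)
    (r : E → ℝ) (hr : ∀ e, 0 < r e)
    (B : Matrix E V ℝ)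
    (hB : ∀ e v, B e v = (if v = head e then (1 : ℝ) else 0) - (if v = tail e then 1 else 0))
    (L : Matrix V V ℝ)
    (hL : L = Bᵀ * Matrix.diagonal (fun e => (r e)⁻¹) * B)
    (hconn : ∀ x : V → ℝ, L *ᵥ x = 0 → ∀ v w : V, x v = x w)
    (Ld : Matrix V V ℝ) (hLd : IsMoorePenrose L Ld)
    (χst : V → ℝ)
    (hχ : χst = fun v => (if v = t then (1 : ℝ) else 0) - (if v = s then 1 else 0))
    (f : E → ℝ)
    (hf : f = fun e => (r e)⁻¹ * (B *ᵥ (Ld *ᵥ χst)) e)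
    (En : ℝ) (hEn : En = χst ⬝ᵥ (Ld *ᵥ χst))
    (e : E) :
    r e * f e ^ 2 ≤ min (r e) ((r e)⁻¹ * En ^ 2) := by
  set p := Ld *ᵥ χst
  have hq e : 0 < (r e)⁻¹ := inv_pos.2 (hr e)
  have hLsymm : Lᵀ = L := by simp [hL, transpose_mul, Matrix.mul_assoc]
  have hL_const (x : V → ℝ) (hx : ∀ e, x (head e) = x (tail e)) : L *ᵥ x = 0 :=
    hL ▸ transpose_mul_diagonal_mul_mulVec_eq_zero hB _ hx
  have hLp : L *ᵥ p = χst :=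
    hLd.mulVec_mulVec_of_sum_eq_zero hLsymm hconn (hL_const _ fun _ => rfl)
      (by simp [hχ, Finset.sum_sub_distrib])
  have hp : IsUnitPotential head tail (fun e => (r e)⁻¹) s t p :=
    isUnitPotential_of_mulVec_eq hB _ s t (hL ▸ hχ ▸ hLp)
  have hfe : f e = (r e)⁻¹ * (p (head e) - p (tail e)) := by
    simp only [hf, mulVec_incidence hB]
  have hEn' : En = p t - p s := by rw [hEn, hχ, dotProduct_indicator_sub]
  refine le_min ?_ ?_
  · have hf1 : f e ^ 2 ≤ 1 :=
      (sq_le_one_iff_abs_le_one _).2 (hfe ▸ hp.abs_flow_le_one (hq · |>.le) e)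
    exact mul_le_of_le_one_right (hr e).le hf1
  · have hΔ := hEn' ▸ hp.abs_sub_le hq (fun x hx => hconn x (hL_const x hx)) (head e) (tail e)
    calc r e * f e ^ 2 = (r e)⁻¹ * (p (head e) - p (tail e)) ^ 2 := by
          rw [hfe]; field_simp [(hr e).ne']
      _ ≤ (r e)⁻¹ * En ^ 2 :=
          mul_le_mul_of_nonneg_left (sq_le_sq' (abs_le.1 hΔ).1 (abs_le.1 hΔ).2) (hq e).le

/-- Lemma `badres`: for every edge `e`, the energy of `e` in the unit
`s`-`t` electric flow satisfies `r_e · f_e² ≤ min (r_e, r_e⁻¹ · 𝓔²)`. -/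
theorem energy_le_min {V E : Type*} [Fintype V] [Fintype E] [DecidableEq V] [DecidableEq E]
    [Nonempty E]
    (head tail : E → V) (s t : V) (hst : s ≠ t)
    (r : E → ℝ) (hr : ∀ e, 0 < r e)
    (B : Matrix E V ℝ)
    (hB : ∀ e v, B e v = (if v = head e then (1 : ℝ) else 0) - (if v = tail e then 1 else 0))
    (L : Matrix V V ℝ)
    (hL : L = Bᵀ * Matrix.diagonal (fun e => (r e)⁻¹) * B)
    (hconn : ∀ x : V → ℝ, L *ᵥ x = 0 → ∀ v w : V, x v = x w)
    (Ld : Matrix V V ℝ) (hLd : IsMoorePenrose L Ld)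
    (χst : V → ℝ)
    (hχ : χst = fun v => (if v = t then (1 : ℝ) else 0) - (if v = s then 1 else 0))
    (f : E → ℝ)
    (hf : f = fun e => (r e)⁻¹ * (B *ᵥ (Ld *ᵥ χst)) e)
    (En : ℝ) (hEn : En = χst ⬝ᵥ (Ld *ᵥ χst))
    (e : E) :
    r e * f e ^ 2 ≤ min (r e) ((r e)⁻¹ * En ^ 2) :=
  energy_le_min_general head tail s t r hr B hB L hL hconn Ld hLd χst hχ f hf En hEn e
end

section
/- Let ε > 0 and let L̃ be a real symmetric positive semidefinite matrix with ker L̃ = ker L and e^{−ε} L ⪯ L̃ ⪯ e^{ε} L (in the Loewner order). Then for every edge e of G, r_e^{−1/2} · |χ_eᵀ (L† − L̃†) χ_{st}| ≤ (e^{ε} − 1) · √𝓔. -/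
open Matrix

namespace Matrix

variable {n : Type*}

theorem PosSemidef.isSymm {M : Matrix n n ℝ} (hM : M.PosSemidef) : M.IsSymm := by
  simpa [IsSymm, conjTranspose_eq_transpose_of_trivial] using hM.isHermitian.eq

variable [Fintype n]

theorem IsSymm.dotProduct_mulVec_comm {α : Type*} [CommSemiring α] {M : Matrix n n α}
    (hM : M.IsSymm) (x y : n → α) : x ⬝ᵥ (M *ᵥ y) = y ⬝ᵥ (M *ᵥ x) := by
  rw [dotProduct_mulVec, ← vecMul_transpose, hM.eq, dotProduct_comm]

theorem PosSemidef.dotProduct_mulVec_self_nonneg {M : Matrix n n ℝ} (hM : M.PosSemidef)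
    (x : n → ℝ) : 0 ≤ x ⬝ᵥ (M *ᵥ x) := by
  simpa using hM.dotProduct_mulVec_nonneg x

theorem dotProduct_mulVec_le_of_posSemidef_sub {A B : Matrix n n ℝ} (h : (B - A).PosSemidef)
    (x : n → ℝ) : x ⬝ᵥ (A *ᵥ x) ≤ x ⬝ᵥ (B *ᵥ x) := by
  have := h.dotProduct_mulVec_self_nonneg x
  rwa [sub_mulVec, dotProduct_sub, sub_nonneg] at this

/-- The orthogonal complement of `ker M` for the dot product; for symmetric `M` it is the range
of `M`. -/
def kerPerp (M : Matrix n n ℝ) : Submodule ℝ (n → ℝ) :=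
  (LinearMap.ker M.mulVecLin).orthogonalBilin (dotProductBilin ℝ ℝ)

theorem mem_kerPerp {M : Matrix n n ℝ} {w : n → ℝ} :
    w ∈ M.kerPerp ↔ ∀ k, M *ᵥ k = 0 → k ⬝ᵥ w = 0 := by
  simp [kerPerp]

theorem kerPerp_congr {M N : Matrix n n ℝ} (h : ∀ x, M *ᵥ x = 0 ↔ N *ᵥ x = 0) :
    M.kerPerp = N.kerPerp := by
  ext w
  simp only [mem_kerPerp, h]

theorem IsSymm.mulVec_mem_kerPerp {M : Matrix n n ℝ} (hM : M.IsSymm) (u : n → ℝ) :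
    M *ᵥ u ∈ M.kerPerp :=
  mem_kerPerp.2 fun k hk => by rw [hM.dotProduct_mulVec_comm, hk, dotProduct_zero]

theorem IsSymm.mulVec_mulVec_of_mem_kerPerp {M Md : Matrix n n ℝ} (hM : M.IsSymm)
    (h₁ : M * Md * M = M) (h₃ : (M * Md)ᵀ = M * Md) {w : n → ℝ} (hw : w ∈ M.kerPerp) :
    M *ᵥ (Md *ᵥ w) = w := by
  have hMP : M * (M * Md) = M := by
    calc M * (M * Md) = M * (M * Md)ᵀ := by rw [h₃]
      _ = (M * Md * M)ᵀ := by simp only [transpose_mul, hM.eq, Matrix.mul_assoc]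
      _ = M := by rw [h₁, hM.eq]
  set k := w - M *ᵥ (Md *ᵥ w)
  have hk : M *ᵥ k = 0 := by
    rw [mulVec_sub, mulVec_mulVec, mulVec_mulVec, Matrix.mul_assoc, hMP, sub_self]
  have hkk : k ⬝ᵥ k = 0 := by
    calc k ⬝ᵥ k = k ⬝ᵥ w - (Md *ᵥ w) ⬝ᵥ (M *ᵥ k) := by
          conv_lhs => rw [dotProduct_sub, hM.dotProduct_mulVec_comm]
      _ = 0 := by rw [mem_kerPerp.1 hw k hk, hk, dotProduct_zero, sub_zero]
  exact (sub_eq_zero.1 (dotProduct_self_eq_zero.1 hkk)).symm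

theorem IsSymm.dotProduct_mulVec_comm_of_mulVec_mulVec {M Md : Matrix n n ℝ} (hM : M.IsSymm)
    {w z : n → ℝ} (hw : M *ᵥ (Md *ᵥ w) = w) (hz : M *ᵥ (Md *ᵥ z) = z) :
    w ⬝ᵥ (Md *ᵥ z) = z ⬝ᵥ (Md *ᵥ w) := by
  conv_lhs => rw [← hw, dotProduct_comm, hM.dotProduct_mulVec_comm, hz]
  exact dotProduct_comm _ _

/-- Loewner order reverses under inversion: `x` and `y` are preimages of `w` under `M` and `N`,
and `M ⪯ c • N` is only needed at `y`. -/
theorem PosSemidef.dotProduct_le_mul_of_mulVec_eq {M N : Matrix n n ℝ} (hM : M.PosSemidef)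
    {c : ℝ} (hc : 0 < c) {w x y : n → ℝ} (hx : M *ᵥ x = w) (hy : N *ᵥ y = w)
    (hMN : y ⬝ᵥ (M *ᵥ y) ≤ c * (y ⬝ᵥ (N *ᵥ y))) : w ⬝ᵥ y ≤ c * (w ⬝ᵥ x) := by
  have hsq := hM.dotProduct_mulVec_self_nonneg (y - c • x)
  have hcross : x ⬝ᵥ (M *ᵥ y) = y ⬝ᵥ w := by rw [hM.isSymm.dotProduct_mulVec_comm, hx]
  simp only [mulVec_sub, mulVec_smul, hx, dotProduct_sub, sub_dotProduct, dotProduct_smul,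
    smul_dotProduct, smul_eq_mul, hcross] at hsq
  rw [hy, dotProduct_comm y w] at hMN
  rw [dotProduct_comm y w, dotProduct_comm x w] at hsq
  have : c * (w ⬝ᵥ y) ≤ c * (c * (w ⬝ᵥ x)) := by linarith
  exact le_of_mul_le_mul_left this hc

theorem two_mul_dotProduct_mulVec_le {S : Submodule ℝ (n → ℝ)} {D P : Matrix n n ℝ} {δ : ℝ}
    (hD : ∀ w ∈ S, ∀ z ∈ S, w ⬝ᵥ (D *ᵥ z) = z ⬝ᵥ (D *ᵥ w))
    (hDP : ∀ w ∈ S, |w ⬝ᵥ (D *ᵥ w)| ≤ δ * (w ⬝ᵥ (P *ᵥ w)))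
    {w z : n → ℝ} (hw : w ∈ S) (hz : z ∈ S) :
    2 * (w ⬝ᵥ (D *ᵥ z)) ≤ δ * (w ⬝ᵥ (P *ᵥ w) + z ⬝ᵥ (P *ᵥ z)) := by
  have hadd := (abs_le.1 (hDP _ (S.add_mem hw hz))).2
  have hsub := (abs_le.1 (hDP _ (S.sub_mem hw hz))).1
  have hsymm := hD w hw z hz
  simp only [mulVec_add, mulVec_sub, dotProduct_add, add_dotProduct, dotProduct_sub,
    sub_dotProduct] at hadd hsub
  linarith

section PseudoinverseComparison

variable {L Lt Ld Ltd : Matrix n n ℝ} {ε : ℝ}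

theorem abs_dotProduct_sub_le_of_mulVec_eq (hL : L.PosSemidef) (hLt : Lt.PosSemidef)
    (hlow : (Lt - Real.exp (-ε) • L).PosSemidef) (hup : (Real.exp ε • L - Lt).PosSemidef)
    {w x y : n → ℝ} (hx : L *ᵥ x = w) (hy : Lt *ᵥ y = w) :
    |w ⬝ᵥ x - w ⬝ᵥ y| ≤ (Real.exp ε - 1) * (w ⬝ᵥ x) := by
  have hLLt := dotProduct_mulVec_le_of_posSemidef_sub hlow y
  rw [smul_mulVec, dotProduct_smul, smul_eq_mul, Real.exp_neg,
    inv_mul_le_iff₀ (Real.exp_pos ε)] at hLLt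
  have hLtL := dotProduct_mulVec_le_of_posSemidef_sub hup x
  rw [smul_mulVec, dotProduct_smul, smul_eq_mul] at hLtL
  have hyx := hL.dotProduct_le_mul_of_mulVec_eq (Real.exp_pos ε) hx hy hLLt
  have hxy := hLt.dotProduct_le_mul_of_mulVec_eq (Real.exp_pos ε) hy hx hLtL
  have hx0 : 0 ≤ w ⬝ᵥ x := by
    rw [← hx, dotProduct_comm]
    exact hL.dotProduct_mulVec_self_nonneg x
  rw [abs_le]
  constructor
  · linarith
  · nlinarith [mul_nonneg (sq_nonneg (Real.exp ε - 1)) hx0, Real.exp_pos ε]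

theorem dotProduct_mulVec_pinv_sub_le (hL : L.PosSemidef) (hLt : Lt.PosSemidef) (hε : 0 < ε)
    (hlow : (Lt - Real.exp (-ε) • L).PosSemidef) (hup : (Real.exp ε • L - Lt).PosSemidef)
    (hLd : ∀ w ∈ L.kerPerp, L *ᵥ (Ld *ᵥ w) = w) (hLtd : ∀ w ∈ L.kerPerp, Lt *ᵥ (Ltd *ᵥ w) = w)
    {χ : n → ℝ} (hχ : χ ∈ L.kerPerp) :
    ((Ld - Ltd) *ᵥ χ) ⬝ᵥ (L *ᵥ ((Ld - Ltd) *ᵥ χ)) ≤ (Real.exp ε - 1) ^ 2 * (χ ⬝ᵥ (Ld *ᵥ χ)) := by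
  set u := (Ld - Ltd) *ᵥ χ
  set δ := Real.exp ε - 1
  have hδ : 0 < δ := by simpa [δ] using hε
  have hsymm : ∀ w ∈ L.kerPerp, ∀ z ∈ L.kerPerp,
      w ⬝ᵥ ((Ld - Ltd) *ᵥ z) = z ⬝ᵥ ((Ld - Ltd) *ᵥ w) := fun w hw z hz => by
    rw [sub_mulVec, sub_mulVec, dotProduct_sub, dotProduct_sub,
      hL.isSymm.dotProduct_mulVec_comm_of_mulVec_mulVec (hLd w hw) (hLd z hz),
      hLt.isSymm.dotProduct_mulVec_comm_of_mulVec_mulVec (hLtd w hw) (hLtd z hz)]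
  have hbound : ∀ w ∈ L.kerPerp, |w ⬝ᵥ ((Ld - Ltd) *ᵥ w)| ≤ δ * (w ⬝ᵥ (Ld *ᵥ w)) :=
    fun w hw => by
      rw [sub_mulVec, dotProduct_sub]
      exact abs_dotProduct_sub_le_of_mulVec_eq hL hLt hlow hup (hLd w hw) (hLtd w hw)
  have hLu : L *ᵥ u ∈ L.kerPerp := hL.isSymm.mulVec_mem_kerPerp u
  have hpol := two_mul_dotProduct_mulVec_le hsymm hbound hLu (L.kerPerp.smul_mem δ hχ)
  have hcross : (L *ᵥ u) ⬝ᵥ ((Ld - Ltd) *ᵥ (δ • χ)) = δ * (u ⬝ᵥ (L *ᵥ u)) := by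
    rw [mulVec_smul, dotProduct_smul, smul_eq_mul, dotProduct_comm,
      ← hL.isSymm.dotProduct_mulVec_comm]
  have hLdLu : (L *ᵥ u) ⬝ᵥ (Ld *ᵥ (L *ᵥ u)) = u ⬝ᵥ (L *ᵥ u) := by
    rw [dotProduct_comm, hL.isSymm.dotProduct_mulVec_comm, hLd _ hLu]
  have hχχ : (δ • χ) ⬝ᵥ (Ld *ᵥ (δ • χ)) = δ ^ 2 * (χ ⬝ᵥ (Ld *ᵥ χ)) := by
    rw [mulVec_smul, dotProduct_smul, smul_dotProduct, smul_eq_mul, smul_eq_mul]; ring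
  rw [hcross, hLdLu, hχχ] at hpol
  nlinarith

end PseudoinverseComparison

section Laplacian

variable {V E : Type*} [Fintype V] [Fintype E] [DecidableEq E]

theorem posSemidef_transpose_mul_diagonal_mul {w : E → ℝ} (hw : ∀ e, 0 ≤ w e)
    (B : Matrix E V ℝ) : (Bᵀ * diagonal w * B).PosSemidef := by
  simpa [conjTranspose_eq_transpose_of_trivial] using
    (PosSemidef.diagonal hw).conjTranspose_mul_mul_same B

theorem dotProduct_transpose_mul_diagonal_mul_mulVec (w : E → ℝ) (B : Matrix E V ℝ)
    (u : V → ℝ) : u ⬝ᵥ ((Bᵀ * diagonal w * B) *ᵥ u) = ∑ e, w e * (B *ᵥ u) e ^ 2 := by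
  rw [← mulVec_mulVec, ← mulVec_mulVec, dotProduct_mulVec, ← mulVec_transpose,
    transpose_transpose]
  simp only [dotProduct, mulVec_diagonal]
  exact Finset.sum_congr rfl fun e _ => by ring

theorem sq_mulVec_apply_le {r : E → ℝ} (hr : ∀ e, 0 < r e) (B : Matrix E V ℝ) (u : V → ℝ)
    (e : E) : (B *ᵥ u) e ^ 2 ≤ r e * (u ⬝ᵥ ((Bᵀ * diagonal (fun e => (r e)⁻¹) * B) *ᵥ u)) := by
  rw [dotProduct_transpose_mul_diagonal_mul_mulVec, ← inv_mul_le_iff₀ (hr e)]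
  exact Finset.single_le_sum (f := fun e => (r e)⁻¹ * (B *ᵥ u) e ^ 2)
    (fun e _ => mul_nonneg (inv_nonneg.2 (hr e).le) (sq_nonneg _)) (Finset.mem_univ e)

end Laplacian

end Matrix

theorem approx_solver_flow_error_general {V E : Type*} [Fintype V] [Fintype E] [DecidableEq V]
    [DecidableEq E]
    (s t : V)
    (r : E → ℝ) (hr : ∀ e, 0 < r e)
    (B : Matrix E V ℝ)
    (L : Matrix V V ℝ)
    (hL : L = Bᵀ * Matrix.diagonal (fun e => (r e)⁻¹) * B)
    (hconn : ∀ x : V → ℝ, L *ᵥ x = 0 → ∀ v w : V, x v = x w)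
    (Ld : Matrix V V ℝ) (hLd : IsMoorePenrose L Ld)
    (χst : V → ℝ)
    (hχ : χst = fun v => (if v = t then (1 : ℝ) else 0) - (if v = s then 1 else 0))
    (En : ℝ) (hEn : En = χst ⬝ᵥ (Ld *ᵥ χst))
    (ε : ℝ) (hε : 0 < ε)
    (Lt : Matrix V V ℝ) (hLtpsd : Lt.PosSemidef)
    (hker : ∀ x : V → ℝ, Lt *ᵥ x = 0 ↔ L *ᵥ x = 0)
    (hlow : (Lt - Real.exp (-ε) • L).PosSemidef)
    (hup : (Real.exp ε • L - Lt).PosSemidef)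
    (Ltd : Matrix V V ℝ) (hLtd : IsMoorePenrose Lt Ltd) :
    ∀ e : E,
      (Real.sqrt (r e))⁻¹ * |(fun v => B e v) ⬝ᵥ ((Ld - Ltd) *ᵥ χst)| ≤
        (Real.exp ε - 1) * Real.sqrt En := by
  intro e
  have hLpsd : L.PosSemidef :=
    hL ▸ posSemidef_transpose_mul_diagonal_mul (fun e => (inv_pos.2 (hr e)).le) B
  have hχst : χst ∈ L.kerPerp := mem_kerPerp.2 fun k hk => by
    simp [hχ, dotProduct, mul_sub, Finset.sum_sub_distrib, hconn k hk t s]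
  have hkerPerp : Lt.kerPerp = L.kerPerp := kerPerp_congr hker
  have henergy := dotProduct_mulVec_pinv_sub_le hLpsd hLtpsd hε hlow hup
    (fun w hw => hLpsd.isSymm.mulVec_mulVec_of_mem_kerPerp hLd.1 hLd.2.2.1 hw)
    (fun w hw => hLtpsd.isSymm.mulVec_mulVec_of_mem_kerPerp hLtd.1 hLtd.2.2.1 (hkerPerp ▸ hw))
    hχst
  have hsq : (B *ᵥ ((Ld - Ltd) *ᵥ χst)) e ^ 2 ≤ r e * ((Real.exp ε - 1) ^ 2 * En) := by
    refine (sq_mulVec_apply_le hr B _ e).trans (mul_le_mul_of_nonneg_left ?_ (hr e).le)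
    rw [← hL, hEn]
    exact henergy
  have hδ : 0 ≤ Real.exp ε - 1 := by linarith [Real.add_one_le_exp ε]
  have habs := Real.abs_le_sqrt hsq
  rw [Real.sqrt_mul (hr e).le, Real.sqrt_mul (sq_nonneg _), Real.sqrt_sq hδ] at habs
  rw [inv_mul_le_iff₀ (Real.sqrt_pos.2 (hr e))]
  exact habs

/-- Lemma `approxenergy`: if `L̃` is symmetric PSD with the same kernel
as `L` and `e^{−ε} L ⪯ L̃ ⪯ e^{ε} L`, then for every edge `e`,
`r_e^{−1/2} · |χ_eᵀ (L† − L̃†) χ_{st}| ≤ (e^ε − 1) · √𝓔`. -/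
theorem approx_solver_flow_error {V E : Type*} [Fintype V] [Fintype E] [DecidableEq V]
    [DecidableEq E] [Nonempty E]
    (head tail : E → V) (s t : V) (hst : s ≠ t)
    (r : E → ℝ) (hr : ∀ e, 0 < r e)
    (B : Matrix E V ℝ)
    (hB : ∀ e v, B e v = (if v = head e then (1 : ℝ) else 0) - (if v = tail e then 1 else 0))
    (L : Matrix V V ℝ)
    (hL : L = Bᵀ * Matrix.diagonal (fun e => (r e)⁻¹) * B)
    (hconn : ∀ x : V → ℝ, L *ᵥ x = 0 → ∀ v w : V, x v = x w)
    (Ld : Matrix V V ℝ) (hLd : IsMoorePenrose L Ld)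
    (χst : V → ℝ)
    (hχ : χst = fun v => (if v = t then (1 : ℝ) else 0) - (if v = s then 1 else 0))
    (En : ℝ) (hEn : En = χst ⬝ᵥ (Ld *ᵥ χst))
    (ε : ℝ) (hε : 0 < ε)
    (Lt : Matrix V V ℝ) (hLtsymm : Ltᵀ = Lt) (hLtpsd : Lt.PosSemidef)
    (hker : ∀ x : V → ℝ, Lt *ᵥ x = 0 ↔ L *ᵥ x = 0)
    (hlow : (Lt - Real.exp (-ε) • L).PosSemidef)
    (hup : (Real.exp ε • L - Lt).PosSemidef)
    (Ltd : Matrix V V ℝ) (hLtd : IsMoorePenrose Lt Ltd) :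
    ∀ e : E,
      (Real.sqrt (r e))⁻¹ * |(fun v => B e v) ⬝ᵥ ((Ld - Ltd) *ᵥ χst)| ≤
        (Real.exp ε - 1) * Real.sqrt En :=
  approx_solver_flow_error_general s t r hr B L hL hconn Ld hLd χst hχ En hEn ε hε Lt hLtpsd hker
    hlow hup Ltd hLtd
end

section
/- Let C be a nonempty strict subset of V and let x ∈ ℝ^V satisfy x_v = 0 for all v ∉ C and 1ᵀ x = 0. Then (L† x)_C equals SC(L, C)† (x_C) up to an additive multiple of the all-ones vector on C: there exists c ∈ ℝ with (L† x)_C = SC(L, C)† (x_C) + c · 1_C. Equivalently, for every y ∈ ℝ^V supported on C with 1ᵀ y = 0, one has yᵀ L† x = (y_C)ᵀ SC(L, C)† (x_C). -/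
/-!
Put `u = L† x`. As `1ᵀ x = 0` and `ker L` consists of the constants, `L u = x`. Since `x`
vanishes on `F = V ∖ C`, the `F`-rows give `u_F = -L_FF⁻¹ L_FC u_C`, and substituting into the
`C`-rows gives `SC(L, C) u_C = x_C`. The Schur complement is symmetric, and its kernel again
consists of constants, because a kernel vector `z` extends by `-L_FF⁻¹ L_FC z` to a kernel
vector of `L`. Hence `SC(L, C)† x_C` solves the same system and differs from `u_C` by a
constant, which a mean-zero `y` does not see. `L_FF` is invertible because `L` is positive
semidefinite: a kernel vector of `L_FF` extended by zero has zero energy, so it is constant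
and vanishes on `C ≠ ∅`.
-/

open Matrix

theorem IsMoorePenrose.mulVec_mulVec_of_sum_eq_zero_s5 {n : Type*} [Fintype n] {M Md : Matrix n n ℝ}
    (hMP : IsMoorePenrose M Md) (hsym : M.IsSymm)
    (hker : ∀ z : n → ℝ, M *ᵥ z = 0 → ∀ a b, z a = z b) {x : n → ℝ} (hx : ∑ i, x i = 0) :
    M *ᵥ (Md *ᵥ x) = x := by
  classical
  set P : Matrix n n ℝ := 1 - M * Md
  -- The rows of `P` lie in the kernel of `M = Mᵀ`, so each row is constant and kills `x`.
  have hrow : ∀ i, M *ᵥ P i = 0 := fun i => by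
    have hPM : P * M = 0 := by simp only [P, Matrix.sub_mul, Matrix.one_mul, hMP.1, sub_self]
    rw [← vecMul_transpose, hsym]
    exact congrFun hPM i
  have hPx : P *ᵥ x = 0 := funext fun i => by
    calc (P *ᵥ x) i = ∑ j, P i i * x j :=
          Finset.sum_congr rfl fun j _ => congrArg (· * x j) (hker _ (hrow i) j i)
      _ = 0 := by rw [← Finset.mul_sum, hx, mul_zero]
  rw [sub_mulVec, one_mulVec, sub_eq_zero] at hPx
  rw [mulVec_mulVec, ← hPx]

section SchurComplement

variable {V : Type*} {C : Set V} [DecidablePred (· ∈ C)]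

theorem exists_restrict_eq (zC : {v // v ∈ C} → ℝ) (zF : {v // v ∉ C} → ℝ) :
    ∃ u : V → ℝ, (∀ a : {v // v ∈ C}, u a = zC a) ∧ ∀ a : {v // v ∉ C}, u a = zF a :=
  ⟨fun v => if h : v ∈ C then zC ⟨v, h⟩ else zF ⟨v, h⟩,
    fun a => dif_pos a.2, fun a => dif_neg a.2⟩

variable [Fintype V]

theorem sum_subtype_eq_sum_of_forall_not_mem {f : V → ℝ} (hf : ∀ v, v ∉ C → f v = 0) :
    ∑ a : {v // v ∈ C}, f a = ∑ v, f v := by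
  rw [← Fintype.sum_subtype_add_sum_subtype (· ∈ C) f,
    Fintype.sum_eq_zero (fun a : {v // v ∉ C} => f a) fun a => hf a a.2, add_zero]

theorem dotProduct_eq_subtype_dotProduct_of_eq_add_const {w : V → ℝ}
    {w' : {v // v ∈ C} → ℝ} {c : ℝ} (hw : ∀ a : {v // v ∈ C}, w a = w' a + c)
    {y : V → ℝ} (hy0 : ∀ v, v ∉ C → y v = 0) (hysum : ∑ v, y v = 0) :
    y ⬝ᵥ w = (fun a : {v // v ∈ C} => y a) ⬝ᵥ w' :=
  calc y ⬝ᵥ w = ∑ a : {v // v ∈ C}, y a * w a :=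
        (sum_subtype_eq_sum_of_forall_not_mem fun v hv => by rw [hy0 v hv, zero_mul]).symm
    _ = ∑ a : {v // v ∈ C}, (y a * w' a + c * y a) :=
        Finset.sum_congr rfl fun a _ => by rw [hw]; ring
    _ = (fun a : {v // v ∈ C} => y a) ⬝ᵥ w' := by
        rw [Finset.sum_add_distrib, ← Finset.mul_sum, sum_subtype_eq_sum_of_forall_not_mem hy0,
          hysum, mul_zero, add_zero]
        rfl

theorem mulVec_apply_eq_add {p : V → Prop} (L : Matrix V V ℝ) (u : V → ℝ) (a : {v // p v}) :
    (L *ᵥ u) a =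
      (L.toBlock p (· ∈ C) *ᵥ (fun b => u b)) a + (L.toBlock p (· ∉ C) *ᵥ (fun b => u b)) a :=
  (Fintype.sum_subtype_add_sum_subtype (· ∈ C) fun v => L a v * u v).symm

theorem restrict_mulVec_eq_add {p : V → Prop} (L : Matrix V V ℝ) (u : V → ℝ) :
    (fun a : {v // p v} => (L *ᵥ u) a) =
      L.toBlock p (· ∈ C) *ᵥ (fun b => u b) + L.toBlock p (· ∉ C) *ᵥ (fun b => u b) :=
  funext (mulVec_apply_eq_add L u)

variable [DecidableEq V]

noncomputable def schurCompl (L : Matrix V V ℝ) (C : Set V) [DecidablePred (· ∈ C)] :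
    Matrix {v // v ∈ C} {v // v ∈ C} ℝ :=
  L.toBlock (· ∈ C) (· ∈ C) -
    L.toBlock (· ∈ C) (· ∉ C) * (L.toBlock (· ∉ C) (· ∉ C))⁻¹ * L.toBlock (· ∉ C) (· ∈ C)

variable {L : Matrix V V ℝ}

theorem schurCompl_isSymm (hL : L.IsSymm) : (schurCompl L C).IsSymm := by
  have hblock : ∀ p q : V → Prop, (L.toBlock p q)ᵀ = L.toBlock q p := fun p q => by
    rw [toBlock, transpose_submatrix, hL.eq]; rfl
  rw [IsSymm, schurCompl, transpose_sub, transpose_mul, transpose_mul, transpose_nonsing_inv,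
    hblock, hblock, hblock, hblock, Matrix.mul_assoc]

theorem restrict_mulVec_eq_schurCompl_mulVec (hF : IsUnit (L.toBlock (· ∉ C) (· ∉ C)).det)
    {u : V → ℝ} (hu : ∀ a : {v // v ∉ C}, (L *ᵥ u) a = 0) :
    (fun a : {v // v ∈ C} => (L *ᵥ u) a) = schurCompl L C *ᵥ fun b => u b := by
  have huF : (fun b : {v // v ∉ C} => u b) =
      -((L.toBlock (· ∉ C) (· ∉ C))⁻¹ * L.toBlock (· ∉ C) (· ∈ C)) *ᵥ fun b => u b := by
    have hblock : L.toBlock (· ∉ C) (· ∉ C) *ᵥ (fun b => u b) +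
        L.toBlock (· ∉ C) (· ∈ C) *ᵥ (fun b => u b) = 0 := by
      rw [add_comm, ← restrict_mulVec_eq_add]
      exact funext hu
    rw [neg_mulVec, ← mulVec_mulVec, ← mulVec_neg, ← eq_neg_of_add_eq_zero_left hblock,
      mulVec_mulVec, nonsing_inv_mul _ hF, one_mulVec]
  rw [restrict_mulVec_eq_add (C := C) (p := (· ∈ C)), huF, schurCompl, sub_mulVec, neg_mulVec,
    mulVec_neg, mulVec_mulVec, Matrix.mul_assoc, sub_eq_add_neg]

theorem exists_extension_mulVec_eq_zero (hF : IsUnit (L.toBlock (· ∉ C) (· ∉ C)).det)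
    (z : {v // v ∈ C} → ℝ) :
    ∃ u : V → ℝ, (fun a : {v // v ∈ C} => u a) = z ∧ ∀ a : {v // v ∉ C}, (L *ᵥ u) a = 0 := by
  obtain ⟨u, huC, huF⟩ :=
    exists_restrict_eq z (-((L.toBlock (· ∉ C) (· ∉ C))⁻¹ * L.toBlock (· ∉ C) (· ∈ C)) *ᵥ z)
  refine ⟨u, funext huC, fun a => ?_⟩
  rw [mulVec_apply_eq_add (C := C) L u a, funext huC, funext huF, neg_mulVec, mulVec_neg,
    mulVec_mulVec, ← Matrix.mul_assoc, mul_nonsing_inv _ hF, Matrix.one_mul]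
  simp

variable (hker : ∀ z : V → ℝ, L *ᵥ z = 0 → ∀ v w, z v = z w)
include hker

theorem isUnit_det_toBlock_compl (hL : L.PosSemidef) (hC : C.Nonempty) :
    IsUnit (L.toBlock (· ∉ C) (· ∉ C)).det := by
  rw [isUnit_iff_ne_zero, Ne, ← exists_mulVec_eq_zero_iff]
  rintro ⟨z, hz, hLz⟩
  obtain ⟨u, huC, huF⟩ := exists_restrict_eq (0 : {v // v ∈ C} → ℝ) z
  have hLuF : ∀ a : {v // v ∉ C}, (L *ᵥ u) a = 0 := fun a => by
    rw [mulVec_apply_eq_add (C := C) L u a, funext huC, funext huF, hLz]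
    simp
  have hform : star u ⬝ᵥ L *ᵥ u = 0 := Finset.sum_eq_zero fun v _ => by
    by_cases hv : v ∈ C
    · rw [star_trivial, huC ⟨v, hv⟩, Pi.zero_apply, zero_mul]
    · rw [hLuF ⟨v, hv⟩, mul_zero]
  obtain ⟨v₀, hv₀⟩ := hC
  have hu : ∀ v, u v = 0 := fun v => by
    rw [hker u ((hL.dotProduct_mulVec_zero_iff u).1 hform) v v₀, huC ⟨v₀, hv₀⟩, Pi.zero_apply]
  exact hz (funext fun a => by rw [← huF, hu, Pi.zero_apply])

theorem eq_of_schurCompl_mulVec_eq_zero (hF : IsUnit (L.toBlock (· ∉ C) (· ∉ C)).det)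
    (z : {v // v ∈ C} → ℝ) (hz : schurCompl L C *ᵥ z = 0) (a b : {v // v ∈ C}) : z a = z b := by
  obtain ⟨u, rfl, huF⟩ := exists_extension_mulVec_eq_zero hF z
  have huC := restrict_mulVec_eq_schurCompl_mulVec hF huF
  rw [hz] at huC
  refine hker u (funext fun v => ?_) a b
  by_cases hv : v ∈ C
  · exact congrFun huC ⟨v, hv⟩
  · exact huF ⟨v, hv⟩

theorem exists_pinv_mulVec_eq_add_const (hL : L.PosSemidef) (hC : C.Nonempty)
    {Ld : Matrix V V ℝ} (hLd : IsMoorePenrose L Ld)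
    {SCd : Matrix {v // v ∈ C} {v // v ∈ C} ℝ} (hSCd : IsMoorePenrose (schurCompl L C) SCd)
    {x : V → ℝ} (hx0 : ∀ v, v ∉ C → x v = 0) (hxsum : ∑ v, x v = 0) :
    ∃ c : ℝ, ∀ a : {v // v ∈ C}, (Ld *ᵥ x) a = (SCd *ᵥ fun b => x b) a + c := by
  have hsym : L.IsSymm := isHermitian_iff_isSymm.1 hL.isHermitian
  have hF := isUnit_det_toBlock_compl hker hL hC
  have hLu : L *ᵥ (Ld *ᵥ x) = x := hLd.mulVec_mulVec_of_sum_eq_zero_s5 hsym hker hxsum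
  have hSCu : schurCompl L C *ᵥ (fun a => (Ld *ᵥ x) a) = fun a : {v // v ∈ C} => x a := by
    rw [← restrict_mulVec_eq_schurCompl_mulVec hF fun a => by rw [hLu]; exact hx0 a a.2, hLu]
  have hSCw : schurCompl L C *ᵥ (SCd *ᵥ fun a => x a) = fun a : {v // v ∈ C} => x a :=
    hSCd.mulVec_mulVec_of_sum_eq_zero_s5 (schurCompl_isSymm hsym)
      (eq_of_schurCompl_mulVec_eq_zero hker hF)
      (by rw [sum_subtype_eq_sum_of_forall_not_mem hx0, hxsum])
  obtain ⟨v₀, hv₀⟩ := hC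
  refine ⟨(Ld *ᵥ x) v₀ - (SCd *ᵥ fun a => x a) ⟨v₀, hv₀⟩, fun a => ?_⟩
  have hconst := eq_of_schurCompl_mulVec_eq_zero hker hF
    ((fun b : {v // v ∈ C} => (Ld *ᵥ x) b) - SCd *ᵥ fun b => x b)
    (by rw [mulVec_sub, hSCu, hSCw, sub_self]) a ⟨v₀, hv₀⟩
  simp only [Pi.sub_apply] at hconst
  linarith

end SchurComplement

theorem schur_complement_solution_general {V E : Type*} [Fintype V] [Fintype E] [DecidableEq V]
    [DecidableEq E]
    (r : E → ℝ) (hr : ∀ e, 0 < r e)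
    (B : Matrix E V ℝ)
    (L : Matrix V V ℝ)
    (hL : L = Bᵀ * Matrix.diagonal (fun e => (r e)⁻¹) * B)
    (hconn : ∀ x : V → ℝ, L *ᵥ x = 0 → ∀ v w : V, x v = x w)
    (Ld : Matrix V V ℝ) (hLd : IsMoorePenrose L Ld)
    (C : Set V) [DecidablePred (· ∈ C)] (hC : C.Nonempty)
    (LFF : Matrix {v // v ∉ C} {v // v ∉ C} ℝ) (hLFF : LFF = Matrix.of fun a b => L a.1 b.1)
    (LFC : Matrix {v // v ∉ C} {v // v ∈ C} ℝ) (hLFC : LFC = Matrix.of fun a b => L a.1 b.1)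
    (LCF : Matrix {v // v ∈ C} {v // v ∉ C} ℝ) (hLCF : LCF = Matrix.of fun a b => L a.1 b.1)
    (LCC : Matrix {v // v ∈ C} {v // v ∈ C} ℝ) (hLCC : LCC = Matrix.of fun a b => L a.1 b.1)
    (SC : Matrix {v // v ∈ C} {v // v ∈ C} ℝ) (hSC : SC = LCC - LCF * LFF⁻¹ * LFC)
    (SCd : Matrix {v // v ∈ C} {v // v ∈ C} ℝ) (hSCd : IsMoorePenrose SC SCd)
    (x : V → ℝ) (hx0 : ∀ v, v ∉ C → x v = 0) (hxsum : ∑ v, x v = 0) :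
    (∃ c : ℝ, ∀ v : {v // v ∈ C},
        (Ld *ᵥ x) v.1 = (SCd *ᵥ fun w : {v // v ∈ C} => x w.1) v + c) ∧
      (∀ y : V → ℝ, (∀ v, v ∉ C → y v = 0) → ∑ v, y v = 0 →
        y ⬝ᵥ (Ld *ᵥ x) =
          (fun w : {v // v ∈ C} => y w.1) ⬝ᵥ (SCd *ᵥ fun w : {v // v ∈ C} => x w.1)) := by
  have hPSD : L.PosSemidef := by
    rw [hL, ← conjTranspose_eq_transpose_of_trivial]
    exact (PosSemidef.diagonal fun e => (inv_pos.2 (hr e)).le).conjTranspose_mul_mul_same B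
  subst hLFF hLFC hLCF hLCC hSC
  obtain ⟨c, hc⟩ := exists_pinv_mulVec_eq_add_const hconn hPSD hC hLd hSCd hx0 hxsum
  exact ⟨⟨c, hc⟩, fun y hy0 hysum =>
    dotProduct_eq_subtype_dotProduct_of_eq_add_const hc hy0 hysum⟩

/-- Fact `scsubset`: for a demand `x` supported on a nonempty strict
subset `C` of the vertices with total demand zero, `(L† x)_C` equals `SC(L, C)† x_C` up to
an additive multiple of the all-ones vector on `C`; equivalently, dotting against any
mean-zero vector `y` supported on `C` gives `yᵀ L† x = y_Cᵀ SC(L, C)† x_C`. -/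
theorem schur_complement_solution {V E : Type*} [Fintype V] [Fintype E] [DecidableEq V]
    [DecidableEq E] [Nonempty E]
    (head tail : E → V) (s t : V) (hst : s ≠ t)
    (r : E → ℝ) (hr : ∀ e, 0 < r e)
    (B : Matrix E V ℝ)
    (hB : ∀ e v, B e v = (if v = head e then (1 : ℝ) else 0) - (if v = tail e then 1 else 0))
    (L : Matrix V V ℝ)
    (hL : L = Bᵀ * Matrix.diagonal (fun e => (r e)⁻¹) * B)
    (hconn : ∀ x : V → ℝ, L *ᵥ x = 0 → ∀ v w : V, x v = x w)
    (Ld : Matrix V V ℝ) (hLd : IsMoorePenrose L Ld)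
    (C : Set V) [DecidablePred (· ∈ C)] (hC : C.Nonempty) (hCne : C ≠ Set.univ)
    (LFF : Matrix {v // v ∉ C} {v // v ∉ C} ℝ) (hLFF : LFF = Matrix.of fun a b => L a.1 b.1)
    (LFC : Matrix {v // v ∉ C} {v // v ∈ C} ℝ) (hLFC : LFC = Matrix.of fun a b => L a.1 b.1)
    (LCF : Matrix {v // v ∈ C} {v // v ∉ C} ℝ) (hLCF : LCF = Matrix.of fun a b => L a.1 b.1)
    (LCC : Matrix {v // v ∈ C} {v // v ∈ C} ℝ) (hLCC : LCC = Matrix.of fun a b => L a.1 b.1)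
    (SC : Matrix {v // v ∈ C} {v // v ∈ C} ℝ) (hSC : SC = LCC - LCF * LFF⁻¹ * LFC)
    (SCd : Matrix {v // v ∈ C} {v // v ∈ C} ℝ) (hSCd : IsMoorePenrose SC SCd)
    (x : V → ℝ) (hx0 : ∀ v, v ∉ C → x v = 0) (hxsum : ∑ v, x v = 0) :
    (∃ c : ℝ, ∀ v : {v // v ∈ C},
        (Ld *ᵥ x) v.1 = (SCd *ᵥ fun w : {v // v ∈ C} => x w.1) v + c) ∧
      (∀ y : V → ℝ, (∀ v, v ∉ C → y v = 0) → ∑ v, y v = 0 →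
        y ⬝ᵥ (Ld *ᵥ x) =
          (fun w : {v // v ∈ C} => y w.1) ⬝ᵥ (SCd *ᵥ fun w : {v // v ∈ C} => x w.1)) :=
  schur_complement_solution_general r hr B L hL hconn Ld hLd C hC LFF hLFF LFC hLFC LCF hLCF LCC
    hLCC SC hSC SCd hSCd x hx0 hxsum
end

section
/- Let C ⊆ V be nonempty, let v ∈ V∖C, and let d ∈ ℝ^V. Identifying π^C(d) ∈ ℝ^C and π^C(χ_v) ∈ ℝ^C with their zero-paddings in ℝ^{C∪{v}}, and letting χ_v ∈ ℝ^{C∪{v}} denote the indicator vector of v, one has π^{C∪{v}}(d) = π^C(d) + [π^{C∪{v}}(d)]_v · (χ_v − π^C(χ_v)). -/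
/-!
Call `g` a Dirichlet solution for `(C, d)` if `g` vanishes on `C` and `L g = d` off `C`.
Since `L` is positive semidefinite with kernel the constants, such a `g` is unique
(`gᵀ L g = 0` forces `L g = 0`, so `g` is constant, hence zero), the block `L_FF` is invertible,
and `π^C(d) = d - L g`. A solution `g'` for `(C ∪ {v}, d)` is also a solution for `C` once the
demand at `v` is changed to `(L g')_v`, which differs from `d_v` by `[π^{C∪{v}}(d)]_v`; adding that
multiple of the solution for `(C, χ_v)` repairs the demand, and linearity gives the identity.
-/

open Matrix

open Classical in
/-- The projection `π^C(d) = d_C − L_CF L_FF⁻¹ d_F` of a demand vector onto a terminal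
set `C`, viewed as a vector on all of `V` by zero-padding outside `C`. -/
noncomputable def proj {V : Type*} [Fintype V] [DecidableEq V]
    (L : Matrix V V ℝ) (C : Set V) (d : V → ℝ) : V → ℝ :=
  fun v =>
    if h : v ∈ C then
      d v -
        ((Matrix.of (fun (a : {v // v ∈ C}) (b : {v // v ∉ C}) => L a.1 b.1) *
            (Matrix.of (fun (a b : {v // v ∉ C}) => L a.1 b.1))⁻¹) *ᵥ
          fun b : {v // v ∉ C} => d b.1) ⟨v, h⟩
    else 0

lemma posSemidef_transpose_mul_diagonal_inv_mul {V E : Type*} [Fintype V] [Fintype E]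
    [DecidableEq E] (r : E → ℝ) (hr : ∀ e, 0 < r e) (B : Matrix E V ℝ) :
    (Bᵀ * diagonal (fun e => (r e)⁻¹) * B).PosSemidef := by
  simpa only [conjTranspose_eq_transpose_of_trivial] using
    (posSemidef_diagonal_iff.mpr fun e => (inv_pos.mpr (hr e)).le).conjTranspose_mul_mul_same B

namespace Matrix

-- `proj` finds its `Fintype` instances on subtypes classically; ours must be the same ones.
open Classical

variable {V : Type*}

noncomputable def padZero (C : Set V) (x : {u // u ∉ C} → ℝ) : V → ℝ :=
  fun w => if h : w ∈ C then 0 else x ⟨w, h⟩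

lemma padZero_of_mem {C : Set V} (x : {u // u ∉ C} → ℝ) {w : V} (hw : w ∈ C) :
    padZero C x w = 0 := dif_pos hw

variable [Fintype V]

lemma mulVec_padZero (L : Matrix V V ℝ) (C : Set V) (x : {u // u ∉ C} → ℝ) (a : V) :
    (L *ᵥ padZero C x) a = ∑ b : {u // u ∉ C}, L a b * x b := by
  have hin (b : {u // u ∉ C}) : padZero C x b = x b := dif_neg b.2
  have hout (b : {u // ¬u ∉ C}) : L a b * padZero C x b = 0 := by
    rw [padZero_of_mem x (not_not.mp b.2), mul_zero]
  rw [mulVec, dotProduct, ← Fintype.sum_subtype_add_sum_subtype (· ∉ C)]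
  simp only [hin, hout, Finset.sum_const_zero, add_zero]

def IsDirichletSolution (L : Matrix V V ℝ) (C : Set V) (d g : V → ℝ) : Prop :=
  (∀ c ∈ C, g c = 0) ∧ ∀ a ∉ C, (L *ᵥ g) a = d a

namespace IsDirichletSolution

variable {L : Matrix V V ℝ} {C : Set V} {d d' g g' : V → ℝ}

lemma add_smul (hg : IsDirichletSolution L C d g) (hg' : IsDirichletSolution L C d' g')
    (α : ℝ) : IsDirichletSolution L C (d + α • d') (g + α • g') := by
  refine ⟨fun c hc => ?_, fun a ha => ?_⟩
  · simp [hg.1 c hc, hg'.1 c hc]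
  · simp [mulVec_add, mulVec_smul, hg.2 a ha, hg'.2 a ha]

lemma of_insert [DecidableEq V] {v : V} (hg : IsDirichletSolution L (insert v C) d g) :
    IsDirichletSolution L C (Function.update d v ((L *ᵥ g) v)) g := by
  refine ⟨fun c hc => hg.1 c (Set.mem_insert_of_mem v hc), fun a ha => ?_⟩
  rcases eq_or_ne a v with rfl | hav
  · simp
  · rw [Function.update_of_ne hav]
    exact hg.2 a (by simp [hav, ha])

variable (hL : L.PosSemidef) (hconn : ∀ x : V → ℝ, L *ᵥ x = 0 → ∀ v w : V, x v = x w)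
  (hC : C.Nonempty)
include hL hconn hC

lemma eq_zero (hg : IsDirichletSolution L C 0 g) : g = 0 := by
  have hquad : star g ⬝ᵥ L *ᵥ g = 0 := by
    refine Finset.sum_eq_zero fun a _ => ?_
    by_cases ha : a ∈ C
    · simp [hg.1 a ha]
    · simp [hg.2 a ha]
  have hker := (hL.dotProduct_mulVec_zero_iff g).mp hquad
  obtain ⟨c, hc⟩ := hC
  funext w
  exact (hconn g hker w c).trans (hg.1 c hc)

lemma unique (hg : IsDirichletSolution L C d g) (hg' : IsDirichletSolution L C d g') :
    g = g' := by
  have hdiff := hg.add_smul hg' (-1)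
  simp only [neg_one_smul, ← sub_eq_add_neg, sub_self] at hdiff
  exact sub_eq_zero.mp (eq_zero hL hconn hC hdiff)

end IsDirichletSolution

variable [DecidableEq V] {L : Matrix V V ℝ} {C : Set V}
  (hL : L.PosSemidef) (hconn : ∀ x : V → ℝ, L *ᵥ x = 0 → ∀ v w : V, x v = x w)
  (hC : C.Nonempty)
include hL hconn hC

lemma isUnit_det_submatrix_compl :
    IsUnit (L.submatrix (Subtype.val : {u // u ∉ C} → V) Subtype.val).det := by
  rw [isUnit_iff_ne_zero]
  intro hdet
  obtain ⟨x, hx0, hx⟩ := exists_mulVec_eq_zero_iff.mpr hdet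
  have hsol : IsDirichletSolution L C 0 (padZero C x) := by
    refine ⟨fun c hc => padZero_of_mem x hc, fun a ha => ?_⟩
    rw [mulVec_padZero]
    exact congrFun hx ⟨a, ha⟩
  refine hx0 (funext fun b => ?_)
  simpa [padZero, b.2] using congrFun (hsol.eq_zero hL hconn hC) b

lemma isDirichletSolution_padZero (d : V → ℝ) :
    IsDirichletSolution L C d
      (padZero C ((L.submatrix Subtype.val Subtype.val)⁻¹ *ᵥ fun b : {u // u ∉ C} => d b)) := by
  refine ⟨fun c hc => padZero_of_mem _ hc, fun a ha => ?_⟩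
  rw [mulVec_padZero]
  change (L.submatrix Subtype.val Subtype.val *ᵥ _) (⟨a, ha⟩ : {u // u ∉ C}) = d a
  rw [mulVec_mulVec, mul_nonsing_inv _ (isUnit_det_submatrix_compl hL hconn hC), one_mulVec]

lemma exists_isDirichletSolution (d : V → ℝ) : ∃ g, IsDirichletSolution L C d g :=
  ⟨_, isDirichletSolution_padZero hL hconn hC d⟩

lemma proj_eq_sub_mulVec {d g : V → ℝ} (hg : IsDirichletSolution L C d g) :
    proj L C d = d - L *ᵥ g := by
  rw [(isDirichletSolution_padZero hL hconn hC d).unique hL hconn hC hg |>.symm]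
  funext w
  by_cases hw : w ∈ C
  · -- the blocks `Matrix.of …` in `proj` are `submatrix`s of `L` by definition
    simp only [proj, dif_pos hw, Pi.sub_apply, mulVec_padZero, ← mulVec_mulVec]
    rfl
  · simp [proj, hw, (isDirichletSolution_padZero hL hconn hC d).2 w hw]

end Matrix

theorem proj_insert_terminal_general {V E : Type*} [Fintype V] [Fintype E] [DecidableEq V]
    [DecidableEq E]
    (r : E → ℝ) (hr : ∀ e, 0 < r e)
    (B : Matrix E V ℝ)
    (L : Matrix V V ℝ)
    (hL : L = Bᵀ * Matrix.diagonal (fun e => (r e)⁻¹) * B)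
    (hconn : ∀ x : V → ℝ, L *ᵥ x = 0 → ∀ v w : V, x v = x w)
    (C : Set V) (hC : C.Nonempty) (v : V) (d : V → ℝ) :
    ∀ w : V,
      proj L (insert v C) d w =
        proj L C d w +
          proj L (insert v C) d v *
            ((if w = v then (1 : ℝ) else 0) -
              proj L C (fun u => if u = v then (1 : ℝ) else 0) w) := by
  have hpsd : L.PosSemidef := hL ▸ posSemidef_transpose_mul_diagonal_inv_mul r hr B
  have hvC : (insert v C).Nonempty := Set.insert_nonempty v C
  set χ : V → ℝ := fun u => if u = v then 1 else 0
  obtain ⟨g, hg⟩ := exists_isDirichletSolution hpsd hconn hvC d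
  obtain ⟨gχ, hgχ⟩ := exists_isDirichletSolution hpsd hconn hC χ
  set α := proj L (insert v C) d v
  have hα : α = d v - (L *ᵥ g) v := congrFun (proj_eq_sub_mulVec hpsd hconn hvC hg) v
  have hdemand : Function.update d v ((L *ᵥ g) v) + α • χ = d := by
    funext u
    rcases eq_or_ne u v with rfl | huv
    · simp [χ, hα]
    · simp [χ, huv]
  have hsol : IsDirichletSolution L C d (g + α • gχ) :=
    hdemand ▸ hg.of_insert.add_smul hgχ α
  intro w
  rw [proj_eq_sub_mulVec hpsd hconn hvC hg, proj_eq_sub_mulVec hpsd hconn hC hsol,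
    proj_eq_sub_mulVec hpsd hconn hC hgχ]
  simp only [Pi.sub_apply, mulVec_add, mulVec_smul, Pi.add_apply, Pi.smul_apply, smul_eq_mul, χ]
  ring

/-- Fact `projchange`: adding a vertex `v ∉ C` to the terminal set
updates the projection by
`π^{C∪{v}}(d) = π^C(d) + [π^{C∪{v}}(d)]_v · (χ_v − π^C(χ_v))`,
all vectors being identified with their zero-paddings on `V`. -/
theorem proj_insert_terminal {V E : Type*} [Fintype V] [Fintype E] [DecidableEq V]
    [DecidableEq E] [Nonempty E]
    (head tail : E → V) (s t : V) (hst : s ≠ t)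
    (r : E → ℝ) (hr : ∀ e, 0 < r e)
    (B : Matrix E V ℝ)
    (hB : ∀ e v, B e v = (if v = head e then (1 : ℝ) else 0) - (if v = tail e then 1 else 0))
    (L : Matrix V V ℝ)
    (hL : L = Bᵀ * Matrix.diagonal (fun e => (r e)⁻¹) * B)
    (hconn : ∀ x : V → ℝ, L *ᵥ x = 0 → ∀ v w : V, x v = x w)
    (C : Set V) (hC : C.Nonempty) (v : V) (hv : v ∉ C) (d : V → ℝ) :
    ∀ w : V,
      proj L (insert v C) d w =
        proj L C d w +
          proj L (insert v C) d v *
            ((if w = v then (1 : ℝ) else 0) -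
              proj L C (fun u => if u = v then (1 : ℝ) else 0) w) :=
  proj_insert_terminal_general r hr B L hL hconn C hC v d
end

section
/- Let X₁, …, X_n be mutually independent real random variables such that each X_i takes values in the two-element set {0, a_i} for some real a_i with |a_i| ≤ M, where M > 0. Let S = X₁ + ⋯ + X_n, and let t, E > 0 satisfy t ≤ E and Σ_{i=1}^n |𝔼[X_i]| ≤ E. Then ℙ(|S − 𝔼[S]| > t) ≤ 2 exp(−t² / (6 E M)). -/
/-!
Chernoff's method. A variable `X` with values in `{0, a}` satisfies, pointwise,
`exp (s X) ≤ 1 + s X + s² a X` as soon as `|s a| ≤ 1` (this is `exp u ≤ 1 + u + u²` for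
`|u| ≤ 1` at `X = a`, and an equality at `X = 0`). Integrating gives
`mgf X s ≤ exp (s 𝔼X + s² a 𝔼X) ≤ exp (s 𝔼X + s² M |𝔼X|)`, so by independence
`mgf (S - 𝔼S) (±λ) ≤ exp (λ² M E)` for `λ ≤ 1 / M`. The exponential Markov inequality at
`λ = t / (2 M E)`, which is at most `1 / M` because `t ≤ E`, bounds each tail by
`exp (-t² / (4 E M))`.
-/

open MeasureTheory ProbabilityTheory Real

lemma abs_le_abs_of_eq_zero_or_eq {x a : ℝ} (hx : x = 0 ∨ x = a) : |x| ≤ |a| := by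
  rcases hx with rfl | rfl <;> simp

lemma exp_mul_le_of_eq_zero_or_eq {x a s : ℝ} (hx : x = 0 ∨ x = a) (hs : |s * a| ≤ 1) :
    exp (s * x) ≤ 1 + s * x + s ^ 2 * a * x := by
  rcases hx with rfl | rfl
  · simp
  · have := (le_abs_self _).trans (abs_exp_sub_one_sub_id_le hs)
    linarith

namespace ProbabilityTheory

variable {Ω : Type*} [MeasurableSpace Ω] {μ : Measure Ω}

section TwoPoint

variable {X : Ω → ℝ} {a : ℝ}

lemma mem_Icc_of_forall_eq_zero_or_eq (hX : ∀ ω, X ω = 0 ∨ X ω = a) :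
    ∀ᵐ ω ∂μ, X ω ∈ Set.Icc (-|a|) |a| :=
  ae_of_all _ fun ω => abs_le.mp (abs_le_abs_of_eq_zero_or_eq (hX ω))

lemma integrable_of_forall_eq_zero_or_eq [IsFiniteMeasure μ] (hXm : AEMeasurable X μ)
    (hX : ∀ ω, X ω = 0 ∨ X ω = a) : Integrable X μ :=
  Integrable.of_mem_Icc _ _ hXm (mem_Icc_of_forall_eq_zero_or_eq hX)

lemma mgf_le_of_forall_eq_zero_or_eq [IsProbabilityMeasure μ] {s : ℝ} (hXm : AEMeasurable X μ)
    (hX : ∀ ω, X ω = 0 ∨ X ω = a) (hs : |s * a| ≤ 1) :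
    mgf X μ s ≤ exp (s * μ[X] + s ^ 2 * a * μ[X]) := by
  have hXi := integrable_of_forall_eq_zero_or_eq hXm hX
  have hlin : Integrable (fun ω => 1 + s * X ω) μ := (integrable_const 1).add (hXi.const_mul s)
  calc mgf X μ s ≤ ∫ ω, (1 + s * X ω + s ^ 2 * a * X ω) ∂μ :=
        integral_mono (integrable_exp_mul_of_mem_Icc hXm (mem_Icc_of_forall_eq_zero_or_eq hX))
          (hlin.add (hXi.const_mul _)) fun ω => exp_mul_le_of_eq_zero_or_eq (hX ω) hs
    _ = 1 + (s * μ[X] + s ^ 2 * a * μ[X]) := by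
        rw [integral_add hlin (hXi.const_mul _),
          integral_add (integrable_const 1) (hXi.const_mul s), integral_const_mul,
          integral_const_mul]
        simp only [integral_const, probReal_univ, smul_eq_mul, mul_one]
        ring
    _ ≤ exp (s * μ[X] + s ^ 2 * a * μ[X]) := (add_comm _ _).trans_le (add_one_le_exp _)

end TwoPoint

lemma iIndepFun.mgf_sum_le_of_forall_eq_zero_or_eq [IsProbabilityMeasure μ] {ι : Type*}
    [Fintype ι] {X : ι → Ω → ℝ} {a : ι → ℝ} {M s : ℝ} (hindep : iIndepFun X μ)
    (hXm : ∀ i, Measurable (X i)) (hX : ∀ i ω, X i ω = 0 ∨ X i ω = a i)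
    (ha : ∀ i, |a i| ≤ M) (hs : |s| * M ≤ 1) :
    mgf (∑ i, X i) μ s ≤ exp (s * ∑ i, μ[X i] + s ^ 2 * M * ∑ i, |μ[X i]|) := by
  have hterm : ∀ i, mgf (X i) μ s ≤ exp (s * μ[X i] + s ^ 2 * M * |μ[X i]|) := fun i => by
    have hsa : |s * a i| ≤ 1 :=
      (abs_mul s (a i)).trans_le ((mul_le_mul_of_nonneg_left (ha i) (abs_nonneg s)).trans hs)
    have ham : a i * μ[X i] ≤ M * |μ[X i]| :=
      (le_abs_self _).trans ((abs_mul _ _).trans_le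
        (mul_le_mul_of_nonneg_right (ha i) (abs_nonneg _)))
    refine (mgf_le_of_forall_eq_zero_or_eq (hXm i).aemeasurable (hX i) hsa).trans ?_
    rw [exp_le_exp, mul_assoc _ (a i), mul_assoc _ M]
    gcongr
  calc mgf (∑ i, X i) μ s = ∏ i, mgf (X i) μ s := hindep.mgf_sum hXm _
    _ ≤ ∏ i, exp (s * μ[X i] + s ^ 2 * M * |μ[X i]|) :=
        Finset.prod_le_prod (fun i _ => mgf_nonneg) fun i _ => hterm i
    _ = exp (s * ∑ i, μ[X i] + s ^ 2 * M * ∑ i, |μ[X i]|) := by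
        rw [← exp_sum, Finset.sum_add_distrib, Finset.mul_sum, Finset.mul_sum]

section Chernoff

variable [IsFiniteMeasure μ] {S : Ω → ℝ} {m c l t : ℝ}

lemma measureReal_add_le_le_of_mgf_le (hl : 0 ≤ l)
    (hint : Integrable (fun ω => exp (l * S ω)) μ)
    (hmgf : mgf S μ l ≤ exp (l * m + l ^ 2 * c)) :
    μ.real {ω | m + t ≤ S ω} ≤ exp (-l * t + l ^ 2 * c) :=
  calc μ.real {ω | m + t ≤ S ω} ≤ exp (-l * (m + t)) * mgf S μ l :=
        measure_ge_le_exp_mul_mgf _ hl hint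
    _ ≤ exp (-l * (m + t)) * exp (l * m + l ^ 2 * c) := by gcongr
    _ = exp (-l * t + l ^ 2 * c) := by rw [← exp_add]; ring_nf

lemma measureReal_le_sub_le_of_mgf_le (hl : 0 ≤ l)
    (hint : Integrable (fun ω => exp (-l * S ω)) μ)
    (hmgf : mgf S μ (-l) ≤ exp (-l * m + (-l) ^ 2 * c)) :
    μ.real {ω | S ω ≤ m - t} ≤ exp (-l * t + l ^ 2 * c) :=
  calc μ.real {ω | S ω ≤ m - t} ≤ exp (-(-l) * (m - t)) * mgf S μ (-l) :=
        measure_le_le_exp_mul_mgf _ (neg_nonpos.mpr hl) hint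
    _ ≤ exp (-(-l) * (m - t)) * exp (-l * m + (-l) ^ 2 * c) := by gcongr
    _ = exp (-l * t + l ^ 2 * c) := by rw [← exp_add]; ring_nf

lemma measure_le_abs_sub_le_of_mgf_le (hl : 0 ≤ l)
    (hint : ∀ s, |s| = l → Integrable (fun ω => exp (s * S ω)) μ)
    (hmgf : ∀ s, |s| = l → mgf S μ s ≤ exp (s * m + s ^ 2 * c)) :
    μ {ω | t ≤ |S ω - m|} ≤ ENNReal.ofReal (2 * exp (-l * t + l ^ 2 * c)) := by
  have habs : |l| = l := abs_of_nonneg hl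
  have habs' : |-l| = l := (abs_neg l).trans habs
  have hsplit : {ω | t ≤ |S ω - m|} ⊆ {ω | m + t ≤ S ω} ∪ {ω | S ω ≤ m - t} :=
    fun ω (hω : t ≤ |S ω - m|) => by
      rcases le_abs'.mp hω with h | h
      · exact Or.inr (show S ω ≤ m - t by linarith)
      · exact Or.inl (show m + t ≤ S ω by linarith)
  have hupper := measureReal_add_le_le_of_mgf_le (t := t) hl (hint l habs) (hmgf l habs)
  have hlower := measureReal_le_sub_le_of_mgf_le (t := t) hl (hint (-l) habs') (hmgf (-l) habs')
  calc μ {ω | t ≤ |S ω - m|} ≤ μ {ω | m + t ≤ S ω} + μ {ω | S ω ≤ m - t} :=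
        (measure_mono hsplit).trans (measure_union_le _ _)
    _ ≤ ENNReal.ofReal (exp (-l * t + l ^ 2 * c)) +
          ENNReal.ofReal (exp (-l * t + l ^ 2 * c)) := by
        gcongr
        · exact (ENNReal.le_ofReal_iff_toReal_le (measure_ne_top _ _) (exp_pos _).le).mpr hupper
        · exact (ENNReal.le_ofReal_iff_toReal_le (measure_ne_top _ _) (exp_pos _).le).mpr hlower
    _ = ENNReal.ofReal (2 * exp (-l * t + l ^ 2 * c)) := by
        rw [← ENNReal.ofReal_add (exp_pos _).le (exp_pos _).le, two_mul]

end Chernoff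

end ProbabilityTheory

/-- Corollary of Bernstein's inequality: if `X₁, …, Xₙ` are mutually
independent random variables, each valued in `{0, aᵢ}` with `|aᵢ| ≤ M`, and `t, E > 0`
satisfy `t ≤ E` and `Σᵢ |𝔼[Xᵢ]| ≤ E`, then
`μpr(|S − 𝔼[S]| > t) ≤ 2 exp(−t² / (6 E M))` for `S = Σᵢ Xᵢ`. -/
theorem bernstein_corollary {Ω : Type*} [MeasurableSpace Ω]
    (μpr : Measure Ω) [IsProbabilityMeasure μpr]
    (n : ℕ) (X : Fin n → Ω → ℝ) (a : Fin n → ℝ) (M : ℝ) (hM : 0 < M)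
    (ha : ∀ i, |a i| ≤ M)
    (hrange : ∀ i ω, X i ω = 0 ∨ X i ω = a i)
    (hmeas : ∀ i, Measurable (X i))
    (hindep : iIndepFun X μpr)
    (t E : ℝ) (ht : 0 < t) (hE : 0 < E) (htE : t ≤ E)
    (hsum : ∑ i, |∫ ω, X i ω ∂μpr| ≤ E) :
    μpr {ω | t < |(∑ i, X i ω) - ∫ ω', (∑ i, X i ω') ∂μpr|} ≤
      ENNReal.ofReal (2 * Real.exp (-t ^ 2 / (6 * E * M))) := by
  set l := t / (2 * M * E)
  have hl : 0 ≤ l := by positivity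
  have hlM : l * M ≤ 1 := by
    rw [div_mul_eq_mul_div, div_le_one (by positivity)]
    nlinarith
  have hexponent : -l * t + l ^ 2 * (M * E) ≤ -t ^ 2 / (6 * E * M) := by
    have : -l * t + l ^ 2 * (M * E) = -t ^ 2 / (4 * E * M) := by simp only [l]; field_simp; ring
    rw [this, neg_div, neg_div, neg_le_neg_iff]
    gcongr
    norm_num
  have hmean : ∫ ω, ∑ i, X i ω ∂μpr = ∑ i, μpr[X i] := integral_finsetSum _ fun i _ =>
    integrable_of_forall_eq_zero_or_eq (hmeas i).aemeasurable (hrange i)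
  have hmgf : ∀ s, |s| = l →
      mgf (∑ i, X i) μpr s ≤ exp (s * ∑ i, μpr[X i] + s ^ 2 * (M * E)) :=
    fun s hs => (hindep.mgf_sum_le_of_forall_eq_zero_or_eq hmeas hrange ha (hs ▸ hlM)).trans
      (by rw [mul_assoc _ M]; gcongr)
  have hint : ∀ s, |s| = l → Integrable (fun ω => exp (s * (∑ i, X i) ω)) μpr := fun s _ =>
    hindep.integrable_exp_mul_sum hmeas fun i _ => integrable_exp_mul_of_mem_Icc
      (hmeas i).aemeasurable (mem_Icc_of_forall_eq_zero_or_eq (hrange i))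
  calc μpr {ω | t < |(∑ i, X i ω) - ∫ ω', (∑ i, X i ω') ∂μpr|}
      ≤ μpr {ω | t ≤ |(∑ i, X i) ω - ∑ i, μpr[X i]|} :=
        measure_mono fun ω (hω : t < |_ - _|) => by
          rw [hmean] at hω
          simpa only [Set.mem_ofPred_eq, Finset.sum_apply] using hω.le
    _ ≤ ENNReal.ofReal (2 * exp (-l * t + l ^ 2 * (M * E))) :=
        measure_le_abs_sub_le_of_mgf_le hl hint hmgf
    _ ≤ ENNReal.ofReal (2 * exp (-t ^ 2 / (6 * E * M))) := by gcongr
end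

section
/- Suppose G is preconditioned, μ ∈ (0, F*], 1 ≤ k ≤ √m/10, and μ̂ = μ − kμ/√m. With Δf := f(μ̂) − f(μ), one has Σ_{e∈E} (Δf_e)² · [ 1/(u⁺(f(μ))_e · u⁺(f(μ̂))_e) + 1/(u⁻(f(μ))_e · u⁻(f(μ̂))_e) ] ≤ 500 k². -/
open Matrix

/-- Resistances induced by a flow: `r(f)_e = u⁺(f)_e⁻² + u⁻(f)_e⁻²`. -/
noncomputable def resist {E : Type*} (u f : E → ℝ) (e : E) : ℝ :=
  ((u e - f e) ^ 2)⁻¹ + ((u e + f e) ^ 2)⁻¹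

/-- KKT characterization of the central path flow with parameter `μ`. -/
def IsCentralFlow {V E : Type*} [Fintype V] [Fintype E]
    (B : Matrix E V ℝ) (u : E → ℝ) (χst : V → ℝ) (Fstar μ : ℝ) (f : E → ℝ) : Prop :=
  (∀ e, |f e| < u e) ∧ Bᵀ *ᵥ f = (Fstar - μ) • χst ∧
    ∃ φ : V → ℝ, ∀ e, (B *ᵥ φ) e = (u e - f e)⁻¹ - (u e + f e)⁻¹

/-- Preconditioned graph with parameter `U` and preconditioning edges `P`. -/
def Preconditioned {V E : Type*} [Fintype E] (head tail : E → V) (s t : V)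
    (u : E → ℝ) (U : ℝ) (P : Finset E) : Prop :=
  0 < U ∧
    (∀ e ∈ P, u e = 2 * U ∧ ((head e = s ∧ tail e = t) ∨ (head e = t ∧ tail e = s))) ∧
    (∀ e ∉ P, u e ≤ U) ∧ Fintype.card E ≤ 2 * P.card

/-!
Let `x`, `x̂` be the potential drops `φ t - φ s` of the central flows at `μ`, `μ̂`, and
`S = Σ Δf_e² w_e` the sum to be bounded. The weight `w_e` is the divided difference of the edge
barrier gradient, so `B Δφ = Δf ⊙ w`, and duality with the flow difference (of value `μ - μ̂`)
gives `S = (μ - μ̂)(x̂ - x)`. On a preconditioning edge `Δf_e w_e = ±(x̂ - x)`, and since that edge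
has capacity `2U` and carries the drops `x, x̂ ≥ 0`, `w_e ≤ W := (x + 1/2U)(x̂ + 1/2U) + 1/4U²`.
Summing over `P` gives `|P| (x̂ - x)² ≤ W S`, hence `|P| S ≤ (μ - μ̂)² W`. Finally, duality
against a maximum flow gives `μ x ≤ m` and `μ̂ x̂ ≤ m`, and `μ ≤ F* ≤ 2Um`; so `μ² W ≤ 7 m²` and
`|P| S ≤ 7 k² m ≤ 14 k² |P|`.
-/

/-- The derivative of the edge barrier `-log (c - a) - log (c + a)`; `barrierSecant c a b` is its
divided difference between `a` and `b`. -/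
noncomputable def barrierGrad (c a : ℝ) : ℝ := (c - a)⁻¹ - (c + a)⁻¹

noncomputable def barrierSecant (c a b : ℝ) : ℝ := ((c - a) * (c - b))⁻¹ + ((c + a) * (c + b))⁻¹

section Barrier

variable {c a b : ℝ}

lemma barrierGrad_eq (ha : |a| < c) : barrierGrad c a = 2 * a / ((c - a) * (c + a)) := by
  obtain ⟨h₁, h₂⟩ := abs_lt.mp ha
  have : c - a ≠ 0 := by linarith
  have : c + a ≠ 0 := by linarith
  unfold barrierGrad
  field_simp
  ring

lemma barrierGrad_neg : barrierGrad c (-a) = -barrierGrad c a := by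
  unfold barrierGrad
  rw [sub_neg_eq_add, ← sub_eq_add_neg, neg_sub]

lemma barrierSecant_neg : barrierSecant c (-a) (-b) = barrierSecant c a b := by
  unfold barrierSecant
  rw [sub_neg_eq_add, sub_neg_eq_add, ← sub_eq_add_neg, ← sub_eq_add_neg, add_comm]

lemma barrierSecant_pos (ha : |a| < c) (hb : |b| < c) : 0 < barrierSecant c a b := by
  obtain ⟨ha₁, ha₂⟩ := abs_lt.mp ha
  obtain ⟨hb₁, hb₂⟩ := abs_lt.mp hb
  have : 0 < c - a := by linarith
  have : 0 < c + a := by linarith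
  have : 0 < c - b := by linarith
  have : 0 < c + b := by linarith
  unfold barrierSecant
  positivity

lemma barrierGrad_sub_barrierGrad (ha : |a| < c) (hb : |b| < c) :
    barrierGrad c b - barrierGrad c a = (b - a) * barrierSecant c a b := by
  obtain ⟨ha₁, ha₂⟩ := abs_lt.mp ha
  obtain ⟨hb₁, hb₂⟩ := abs_lt.mp hb
  have : c - a ≠ 0 := by linarith
  have : c + a ≠ 0 := by linarith
  have : c - b ≠ 0 := by linarith
  have : c + b ≠ 0 := by linarith
  unfold barrierGrad barrierSecant
  field_simp
  ring

lemma mul_barrierGrad_nonneg (ha : |a| < c) : 0 ≤ a * barrierGrad c a := by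
  obtain ⟨h₁, h₂⟩ := abs_lt.mp ha
  rw [barrierGrad_eq ha, ← mul_div_assoc]
  exact div_nonneg (by nlinarith [sq_nonneg a]) (mul_nonneg (by linarith) (by linarith))

lemma eq_zero_of_mul_barrierGrad_eq_zero (ha : |a| < c) (h : a * barrierGrad c a = 0) :
    a = 0 := by
  obtain ⟨h₁, h₂⟩ := abs_lt.mp ha
  rw [barrierGrad_eq ha, ← mul_div_assoc, div_eq_zero_iff] at h
  rcases h with h | h <;> nlinarith

lemma nonneg_of_barrierGrad_nonneg (ha : |a| < c) (h : 0 ≤ barrierGrad c a) : 0 ≤ a := by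
  obtain ⟨h₁, h₂⟩ := abs_lt.mp ha
  rw [barrierGrad_eq ha] at h
  have : 0 ≤ 2 * a := (div_nonneg_iff.mp h).elim (·.1) fun h' => by nlinarith [h'.2]
  linarith

lemma sub_mul_barrierGrad_le_one (ha : |a| < c) (hb : |b| ≤ c) :
    (b - a) * barrierGrad c a ≤ 1 := by
  obtain ⟨ha₁, ha₂⟩ := abs_lt.mp ha
  obtain ⟨hb₁, hb₂⟩ := abs_le.mp hb
  have hden : 0 < (c - a) * (c + a) := mul_pos (by linarith) (by linarith)
  rw [barrierGrad_eq ha, ← mul_div_assoc, div_le_one hden]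
  -- `2 a b ≤ 2 |a| c ≤ c² + a²`
  nlinarith [sq_nonneg (c - a), sq_nonneg (c + a),
    mul_nonneg (sub_nonneg.2 hb₂) (sub_nonneg.2 ha₂.le)]

lemma barrierSecant_le (ha : |a| < c) (hb : |b| < c) (hga : 0 ≤ barrierGrad c a)
    (hgb : 0 ≤ barrierGrad c b) :
    barrierSecant c a b ≤ (barrierGrad c a + c⁻¹) * (barrierGrad c b + c⁻¹) + c⁻¹ ^ 2 := by
  have hc : 0 < c := (abs_nonneg a).trans_lt ha
  have ha₀ := nonneg_of_barrierGrad_nonneg ha hga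
  have hb₀ := nonneg_of_barrierGrad_nonneg hb hgb
  have hac : (c + a)⁻¹ ≤ c⁻¹ := inv_anti₀ hc (by linarith)
  have hbc : (c + b)⁻¹ ≤ c⁻¹ := inv_anti₀ hc (by linarith)
  have hca : (c - a)⁻¹ = barrierGrad c a + (c + a)⁻¹ := by unfold barrierGrad; ring
  have hcb : (c - b)⁻¹ = barrierGrad c b + (c + b)⁻¹ := by unfold barrierGrad; ring
  have : 0 < (c + a)⁻¹ := by have := (abs_lt.mp ha).1; positivity
  have : 0 < (c + b)⁻¹ := by have := (abs_lt.mp hb).1; positivity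
  unfold barrierSecant
  rw [mul_inv, mul_inv, hca, hcb, sq]
  gcongr

lemma barrierSecant_le_of_eq_mul {ε y z : ℝ} (hε : ε = 1 ∨ ε = -1) (ha : |a| < c)
    (hb : |b| < c) (hy : 0 ≤ y) (hz : 0 ≤ z) (hga : barrierGrad c a = ε * y)
    (hgb : barrierGrad c b = ε * z) :
    barrierSecant c a b ≤ (y + c⁻¹) * (z + c⁻¹) + c⁻¹ ^ 2 := by
  rcases hε with rfl | rfl
  · rw [one_mul] at hga hgb
    simpa only [hga, hgb] using barrierSecant_le ha hb (hga ▸ hy) (hgb ▸ hz)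
  · have hga' : barrierGrad c (-a) = y := by rw [barrierGrad_neg, hga]; ring
    have hgb' : barrierGrad c (-b) = z := by rw [barrierGrad_neg, hgb]; ring
    rw [← barrierSecant_neg, ← hga', ← hgb']
    exact barrierSecant_le (by rwa [abs_neg]) (by rwa [abs_neg]) (hga' ▸ hy) (hgb' ▸ hz)

end Barrier

section Network

variable {V E : Type*} [Fintype V] [DecidableEq V] {head tail : E → V} {s t : V}
  {B : Matrix E V ℝ} {χst : V → ℝ} {u : E → ℝ}

lemma incidence_mulVec
    (hB : ∀ e v, B e v = (if v = head e then (1 : ℝ) else 0) - (if v = tail e then 1 else 0))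
    (φ : V → ℝ) (e : E) : (B *ᵥ φ) e = φ (head e) - φ (tail e) := by
  simp only [mulVec, dotProduct, hB, sub_mul, ite_mul, one_mul, zero_mul,
    Finset.sum_sub_distrib, Finset.sum_ite_eq', Finset.mem_univ, if_true]

lemma incidence_mulVec_of_joins
    (hB : ∀ e v, B e v = (if v = head e then (1 : ℝ) else 0) - (if v = tail e then 1 else 0))
    {e : E} (he : (head e = s ∧ tail e = t) ∨ (head e = t ∧ tail e = s)) :
    ∃ ε : ℝ, (ε = 1 ∨ ε = -1) ∧ ∀ φ : V → ℝ, (B *ᵥ φ) e = ε * (φ t - φ s) := by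
  rcases he with ⟨hs, ht⟩ | ⟨ht, hs⟩
  · exact ⟨-1, Or.inr rfl, fun φ => by rw [incidence_mulVec hB, hs, ht]; ring⟩
  · exact ⟨1, Or.inl rfl, fun φ => by rw [incidence_mulVec hB, hs, ht]; ring⟩

lemma sq_drop_sub_le_of_joins
    (hB : ∀ e v, B e v = (if v = head e then (1 : ℝ) else 0) - (if v = tail e then 1 else 0))
    {e : E} (he : (head e = s ∧ tail e = t) ∨ (head e = t ∧ tail e = s))
    {f g : E → ℝ} (hfeas : |f e| < u e) (hgfeas : |g e| < u e) {φ ψ : V → ℝ}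
    (hφ : (B *ᵥ φ) e = barrierGrad (u e) (f e)) (hψ : (B *ᵥ ψ) e = barrierGrad (u e) (g e))
    (hφ₀ : 0 ≤ φ t - φ s) (hψ₀ : 0 ≤ ψ t - ψ s) :
    ((ψ t - ψ s) - (φ t - φ s)) ^ 2 ≤
      ((φ t - φ s + (u e)⁻¹) * (ψ t - ψ s + (u e)⁻¹) + (u e)⁻¹ ^ 2) *
        ((g e - f e) ^ 2 * barrierSecant (u e) (f e) (g e)) := by
  obtain ⟨ε, hε, hBe⟩ := incidence_mulVec_of_joins hB he
  have hW := barrierSecant_le_of_eq_mul hε hfeas hgfeas hφ₀ hψ₀ (hφ ▸ hBe φ) (hψ ▸ hBe ψ)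
  have hsec := barrierSecant_pos hfeas hgfeas
  have hdiff : (g e - f e) * barrierSecant (u e) (f e) (g e) =
      ε * ((ψ t - ψ s) - (φ t - φ s)) := by
    rw [← barrierGrad_sub_barrierGrad hfeas hgfeas, ← hφ, ← hψ, hBe, hBe]; ring
  set σ := barrierSecant (u e) (f e) (g e)
  calc ((ψ t - ψ s) - (φ t - φ s)) ^ 2 = (ε * ((ψ t - ψ s) - (φ t - φ s))) ^ 2 := by
        rcases hε with rfl | rfl <;> ring
    _ = (g e - f e) ^ 2 * σ * σ := by rw [← hdiff]; ring
    _ ≤ _ := by rw [mul_comm _ σ]; gcongr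

variable [Fintype E]

lemma dotProduct_mulVec_of_flow
    (hχ : χst = fun v => (if v = t then (1 : ℝ) else 0) - (if v = s then 1 else 0))
    {f : E → ℝ} {F : ℝ} (hf : Bᵀ *ᵥ f = F • χst) (φ : V → ℝ) :
    f ⬝ᵥ (B *ᵥ φ) = F * (φ t - φ s) := by
  rw [dotProduct_mulVec, ← mulVec_transpose, hf, smul_dotProduct, smul_eq_mul, hχ]
  simp only [dotProduct, sub_mul, ite_mul, one_mul, zero_mul, Finset.sum_sub_distrib,
    Finset.sum_ite_eq', Finset.mem_univ, if_true]

/-- Weak duality against the cut `{v ≠ s}`. -/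
lemma flow_value_le_sum_capacity (hst : s ≠ t)
    (hB : ∀ e v, B e v = (if v = head e then (1 : ℝ) else 0) - (if v = tail e then 1 else 0))
    (hχ : χst = fun v => (if v = t then (1 : ℝ) else 0) - (if v = s then 1 else 0))
    {f : E → ℝ} {F : ℝ} (hcap : ∀ e, |f e| ≤ u e) (hf : Bᵀ *ᵥ f = F • χst) :
    F ≤ ∑ e, u e := by
  set ψ : V → ℝ := fun v => if v = s then 0 else 1
  have hcut : ∀ e, |(B *ᵥ ψ) e| ≤ 1 := fun e => by
    rw [incidence_mulVec hB]
    simp only [ψ]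
    split_ifs <;> norm_num
  calc F = f ⬝ᵥ (B *ᵥ ψ) := by
        rw [dotProduct_mulVec_of_flow hχ hf]; simp [ψ, hst.symm]
    _ ≤ ∑ e, |f e| * |(B *ᵥ ψ) e| :=
        Finset.sum_le_sum fun e _ => (le_abs_self _).trans (abs_mul _ _).le
    _ ≤ ∑ e, u e := Finset.sum_le_sum fun e _ => by
        simpa using mul_le_mul (hcap e) (hcut e) (abs_nonneg _) ((abs_nonneg _).trans (hcap e))

lemma potential_drop_nonneg
    (hB : ∀ e v, B e v = (if v = head e then (1 : ℝ) else 0) - (if v = tail e then 1 else 0))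
    (hχ : χst = fun v => (if v = t then (1 : ℝ) else 0) - (if v = s then 1 else 0))
    (hconn : ∀ x : V → ℝ, (∀ e, x (head e) = x (tail e)) → ∀ v w : V, x v = x w)
    {f : E → ℝ} {F : ℝ} (hF : 0 ≤ F) (hfeas : ∀ e, |f e| < u e) (hf : Bᵀ *ᵥ f = F • χst)
    {φ : V → ℝ} (hφ : ∀ e, (B *ᵥ φ) e = barrierGrad (u e) (f e)) :
    0 ≤ φ t - φ s := by
  have hterm : ∀ e, 0 ≤ f e * barrierGrad (u e) (f e) := fun e =>
    mul_barrierGrad_nonneg (hfeas e)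
  have hdual : F * (φ t - φ s) = ∑ e, f e * barrierGrad (u e) (f e) := by
    rw [← dotProduct_mulVec_of_flow hχ hf]
    exact Finset.sum_congr rfl fun e _ => by rw [hφ e]
  rcases hF.lt_or_eq with hF | rfl
  · exact nonneg_of_mul_nonneg_right (hdual ▸ Finset.sum_nonneg fun e _ => hterm e) hF
  -- a flow of value zero vanishes, so `φ` is constant on the (connected) graph
  have hzero : ∀ e, f e = 0 := fun e => eq_zero_of_mul_barrierGrad_eq_zero (hfeas e)
    ((Finset.sum_eq_zero_iff_of_nonneg fun e _ => hterm e).mp (by rw [← hdual, zero_mul])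
      e (Finset.mem_univ e))
  have hconst : ∀ e, φ (head e) = φ (tail e) := fun e => by
    have := hφ e
    rw [incidence_mulVec hB, hzero e, barrierGrad, sub_zero, add_zero, sub_self] at this
    linarith
  rw [hconn φ hconst t s, sub_self]

lemma mul_potential_drop_le_card
    (hχ : χst = fun v => (if v = t then (1 : ℝ) else 0) - (if v = s then 1 else 0))
    {fstar : E → ℝ} {Fstar : ℝ} (hcap : ∀ e, |fstar e| ≤ u e)
    (hfstar : Bᵀ *ᵥ fstar = Fstar • χst)
    {f : E → ℝ} {ν : ℝ} (hfeas : ∀ e, |f e| < u e) (hf : Bᵀ *ᵥ f = (Fstar - ν) • χst)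
    {φ : V → ℝ} (hφ : ∀ e, (B *ᵥ φ) e = barrierGrad (u e) (f e)) :
    ν * (φ t - φ s) ≤ Fintype.card E := by
  have hflow : Bᵀ *ᵥ (fstar - f) = ν • χst := by
    rw [mulVec_sub, hfstar, hf, ← sub_smul, sub_sub_cancel]
  calc ν * (φ t - φ s) = ∑ e, (fstar e - f e) * barrierGrad (u e) (f e) := by
        rw [← dotProduct_mulVec_of_flow hχ hflow]
        exact Finset.sum_congr rfl fun e _ => by rw [hφ e, Pi.sub_apply]
    _ ≤ ∑ _e : E, (1 : ℝ) :=
        Finset.sum_le_sum fun e _ => sub_mul_barrierGrad_le_one (hfeas e) (hcap e)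
    _ = Fintype.card E := by simp

lemma sum_sq_mul_barrierSecant_eq
    (hχ : χst = fun v => (if v = t then (1 : ℝ) else 0) - (if v = s then 1 else 0))
    {f g : E → ℝ} {F G : ℝ} (hfeas : ∀ e, |f e| < u e) (hgfeas : ∀ e, |g e| < u e)
    (hf : Bᵀ *ᵥ f = F • χst) (hg : Bᵀ *ᵥ g = G • χst) {φ ψ : V → ℝ}
    (hφ : ∀ e, (B *ᵥ φ) e = barrierGrad (u e) (f e))
    (hψ : ∀ e, (B *ᵥ ψ) e = barrierGrad (u e) (g e)) :
    ∑ e, (g e - f e) ^ 2 * barrierSecant (u e) (f e) (g e) =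
      (G - F) * ((ψ t - ψ s) - (φ t - φ s)) := by
  have hflow : Bᵀ *ᵥ (g - f) = (G - F) • χst := by rw [mulVec_sub, hf, hg, ← sub_smul]
  rw [sub_sub_sub_comm, ← Pi.sub_apply ψ φ t, ← Pi.sub_apply ψ φ s,
    ← dotProduct_mulVec_of_flow hχ hflow]
  refine Finset.sum_congr rfl fun e _ => ?_
  rw [mulVec_sub, Pi.sub_apply, Pi.sub_apply, hφ, hψ,
    barrierGrad_sub_barrierGrad (hfeas e) (hgfeas e)]
  ring

end Network

lemma Preconditioned.sum_capacity_le {V E : Type*} [Fintype E] {head tail : E → V} {s t : V}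
    {u : E → ℝ} {U : ℝ} {P : Finset E} (h : Preconditioned head tail s t u U P) :
    ∑ e, u e ≤ 2 * U * Fintype.card E := by
  obtain ⟨hU, hP, hnotP, -⟩ := h
  have hcap : ∀ e, u e ≤ 2 * U := fun e => by
    by_cases he : e ∈ P
    · exact (hP e he).1.le
    · linarith [hnotP e he]
  simpa [mul_comm] using Finset.sum_le_card_nsmul Finset.univ u (2 * U) fun e _ => hcap e

lemma card_mul_sq_drop_sub_le {V E : Type*} [Fintype V] [DecidableEq V] [Fintype E]
    {head tail : E → V} {s t : V} {B : Matrix E V ℝ} {u : E → ℝ}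
    (hB : ∀ e v, B e v = (if v = head e then (1 : ℝ) else 0) - (if v = tail e then 1 else 0))
    {P : Finset E} {c : ℝ} (hc : 0 ≤ c)
    (hP : ∀ e ∈ P, u e = c ∧ ((head e = s ∧ tail e = t) ∨ (head e = t ∧ tail e = s)))
    {f g : E → ℝ} (hfeas : ∀ e, |f e| < u e) (hgfeas : ∀ e, |g e| < u e) {φ ψ : V → ℝ}
    (hφ : ∀ e, (B *ᵥ φ) e = barrierGrad (u e) (f e))
    (hψ : ∀ e, (B *ᵥ ψ) e = barrierGrad (u e) (g e))
    (hφ₀ : 0 ≤ φ t - φ s) (hψ₀ : 0 ≤ ψ t - ψ s) :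
    P.card * ((ψ t - ψ s) - (φ t - φ s)) ^ 2 ≤
      ((φ t - φ s + c⁻¹) * (ψ t - ψ s + c⁻¹) + c⁻¹ ^ 2) *
        ∑ e, (g e - f e) ^ 2 * barrierSecant (u e) (f e) (g e) := by
  have hterm : ∀ e, 0 ≤ (g e - f e) ^ 2 * barrierSecant (u e) (f e) (g e) := fun e =>
    mul_nonneg (sq_nonneg _) (barrierSecant_pos (hfeas e) (hgfeas e)).le
  have hc' : 0 ≤ c⁻¹ := inv_nonneg.2 hc
  calc (P.card : ℝ) * ((ψ t - ψ s) - (φ t - φ s)) ^ 2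
      = ∑ e ∈ P, ((ψ t - ψ s) - (φ t - φ s)) ^ 2 := by rw [Finset.sum_const, nsmul_eq_mul]
    _ ≤ ∑ e ∈ P, ((φ t - φ s + c⁻¹) * (ψ t - ψ s + c⁻¹) + c⁻¹ ^ 2) *
          ((g e - f e) ^ 2 * barrierSecant (u e) (f e) (g e)) :=
        Finset.sum_le_sum fun e he => by
          obtain ⟨rfl, hjoin⟩ := hP e he
          exact sq_drop_sub_le_of_joins hB hjoin (hfeas e) (hgfeas e) (hφ e) (hψ e) hφ₀ hψ₀
    _ ≤ _ := by
        rw [← Finset.mul_sum]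
        exact mul_le_mul_of_nonneg_left (Finset.sum_le_univ_sum_of_nonneg hterm) (by positivity)

lemma mul_le_sq_mul_of_sq_le {S c D p W : ℝ} (hS : S = c * D) (h : p * D ^ 2 ≤ W * S)
    (hp : 0 < p) (hW : 0 ≤ W) : p * S ≤ c ^ 2 * W := by
  rcases le_or_gt S 0 with hS₀ | hS₀
  · nlinarith [sq_nonneg c]
  refine le_of_mul_le_mul_right ?_ hS₀
  calc p * S * S = c ^ 2 * (p * D ^ 2) := by rw [hS]; ring
    _ ≤ c ^ 2 * (W * S) := by gcongr
    _ = c ^ 2 * W * S := by ring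

lemma sq_step_mul_weight_le {m k μ x y d : ℝ} (hk1 : 1 ≤ k) (hk2 : k ≤ √m / 10) (hμ : 0 < μ)
    (hx₀ : 0 ≤ x) (hx : μ * x ≤ m) (hy₀ : 0 ≤ y) (hy : (μ - k * μ / √m) * y ≤ m)
    (hd₀ : 0 ≤ d) (hd : μ * d ≤ m) :
    (k * μ / √m) ^ 2 * ((x + d) * (y + d) + d ^ 2) ≤ 7 * k ^ 2 * m := by
  have hr : 10 * k ≤ √m := by linarith
  have hr₀ : 0 < √m := by linarith
  have hm₀ : 0 < m := Real.sqrt_pos.1 hr₀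
  have hm : √m ^ 2 = m := Real.sq_sqrt hm₀.le
  have hstep : k * μ / √m ≤ μ / 10 := by
    rw [div_le_iff₀ hr₀]; nlinarith
  have hy' : μ * y ≤ 10 / 9 * m := by nlinarith
  have hW : μ ^ 2 * ((x + d) * (y + d) + d ^ 2) ≤ 7 * m ^ 2 := by
    have h₁ : μ * (x + d) ≤ 2 * m := by linarith
    have h₂ : μ * (y + d) ≤ 3 * m := by linarith
    have : 0 ≤ μ * (x + d) := by positivity
    have : 0 ≤ μ * d := by positivity
    calc μ ^ 2 * ((x + d) * (y + d) + d ^ 2)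
        = (μ * (x + d)) * (μ * (y + d)) + (μ * d) ^ 2 := by ring
      _ ≤ (2 * m) * (3 * m) + m ^ 2 := by gcongr
      _ = 7 * m ^ 2 := by ring
  calc (k * μ / √m) ^ 2 * ((x + d) * (y + d) + d ^ 2)
      = k ^ 2 * (μ ^ 2 * ((x + d) * (y + d) + d ^ 2)) / m := by rw [div_pow, hm]; ring
    _ ≤ k ^ 2 * (7 * m ^ 2) / m := by gcongr
    _ = 7 * k ^ 2 * m := by field_simp

theorem central_path_l2_stability_general {V E : Type*} [Fintype V] [Fintype E] [DecidableEq V]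
    (head tail : E → V) (s t : V) (hst : s ≠ t)
    (u : E → ℝ)
    (B : Matrix E V ℝ)
    (hB : ∀ e v, B e v = (if v = head e then (1 : ℝ) else 0) - (if v = tail e then 1 else 0))
    (χst : V → ℝ)
    (hχ : χst = fun v => (if v = t then (1 : ℝ) else 0) - (if v = s then 1 else 0))
    (hconn : ∀ x : V → ℝ, (∀ e, x (head e) = x (tail e)) → ∀ v w : V, x v = x w)
    (Fstar : ℝ)
    (hFstar : IsGreatest
      {F : ℝ | ∃ f : E → ℝ, (∀ e, |f e| ≤ u e) ∧ Bᵀ *ᵥ f = F • χst} Fstar)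
    (U : ℝ) (P : Finset E) (hpre : Preconditioned head tail s t u U P)
    (μ : ℝ) (hμ0 : 0 < μ) (hμF : μ ≤ Fstar)
    (k : ℝ) (hk1 : 1 ≤ k) (hk2 : k ≤ Real.sqrt (Fintype.card E) / 10)
    (μhat : ℝ) (hμhat : μhat = μ - k * μ / Real.sqrt (Fintype.card E))
    (fμ : E → ℝ) (hfμ : IsCentralFlow B u χst Fstar μ fμ)
    (fh : E → ℝ) (hfh : IsCentralFlow B u χst Fstar μhat fh) :
    ∑ e, (fh e - fμ e) ^ 2 *
        (((u e - fμ e) * (u e - fh e))⁻¹ + ((u e + fμ e) * (u e + fh e))⁻¹) ≤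
      500 * k ^ 2 := by
  change ∑ e, (fh e - fμ e) ^ 2 * barrierSecant (u e) (fμ e) (fh e) ≤ 500 * k ^ 2
  have hU : 0 < U := hpre.1
  obtain ⟨fstar, hfstar_cap, hfstar⟩ := hFstar.1
  obtain ⟨hfeas, hf, φ, hφ⟩ := hfμ
  obtain ⟨hfeas', hf', φ', hφ'⟩ := hfh
  have hk₀ : 0 < k := by linarith
  have hμhat_le : μhat ≤ μ := hμhat ▸ sub_le_self _ (by positivity)
  have hx₀ := potential_drop_nonneg hB hχ hconn (sub_nonneg.2 hμF) hfeas hf hφ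
  have hx'₀ := potential_drop_nonneg hB hχ hconn (by linarith) hfeas' hf' hφ'
  have hμx := mul_potential_drop_le_card hχ hfstar_cap hfstar hfeas hf hφ
  have hμx' := mul_potential_drop_le_card hχ hfstar_cap hfstar hfeas' hf' hφ'
  have hd : μ * (2 * U)⁻¹ ≤ Fintype.card E := by
    have := (flow_value_le_sum_capacity hst hB hχ hfstar_cap hfstar).trans hpre.sum_capacity_le
    rw [← div_eq_mul_inv, div_le_iff₀ (by positivity)]
    linarith
  have hS := sum_sq_mul_barrierSecant_eq hχ hfeas hfeas' hf hf' hφ hφ'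
  rw [sub_sub_sub_cancel_left, hμhat, sub_sub_cancel] at hS
  have hsq := card_mul_sq_drop_sub_le hB (by positivity) hpre.2.1 hfeas hfeas' hφ hφ' hx₀ hx'₀
  have hm : (Fintype.card E : ℝ) ≤ 2 * P.card := by exact_mod_cast hpre.2.2.2
  have hp : (0 : ℝ) < P.card := by
    have : 0 < √(Fintype.card E : ℝ) := by linarith
    linarith [Real.sqrt_pos.1 this]
  have hpS := mul_le_sq_mul_of_sq_le hS hsq hp (by positivity)
  have hcW := sq_step_mul_weight_le hk1 hk2 hμ0 hx₀ hμx hx'₀ (hμhat ▸ hμx') (by positivity) hd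
  refine le_of_mul_le_mul_left ?_ hp
  calc _ ≤ 7 * k ^ 2 * Fintype.card E := hpS.trans hcW
    _ ≤ P.card * (500 * k ^ 2) := by nlinarith [sq_nonneg k]

/-- Lemma `l2lemma`: for `μ̂ = μ − kμ/√m` with `1 ≤ k ≤ √m/10` and
`Δf = f(μ̂) − f(μ)`, one has
`Σ_e (Δf_e)² [1/(u⁺(f(μ))_e u⁺(f(μ̂))_e) + 1/(u⁻(f(μ))_e u⁻(f(μ̂))_e)] ≤ 500 k²`. -/
theorem central_path_l2_stability {V E : Type*} [Fintype V] [Fintype E] [DecidableEq V]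
    [DecidableEq E]
    (head tail : E → V) (s t : V) (hst : s ≠ t)
    (u : E → ℝ) (hu : ∀ e, 0 < u e)
    (B : Matrix E V ℝ)
    (hB : ∀ e v, B e v = (if v = head e then (1 : ℝ) else 0) - (if v = tail e then 1 else 0))
    (χst : V → ℝ)
    (hχ : χst = fun v => (if v = t then (1 : ℝ) else 0) - (if v = s then 1 else 0))
    (hconn : ∀ x : V → ℝ, (∀ e, x (head e) = x (tail e)) → ∀ v w : V, x v = x w)
    (Fstar : ℝ)
    (hFstar : IsGreatest
      {F : ℝ | ∃ f : E → ℝ, (∀ e, |f e| ≤ u e) ∧ Bᵀ *ᵥ f = F • χst} Fstar)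
    (U : ℝ) (P : Finset E) (hpre : Preconditioned head tail s t u U P)
    (μ : ℝ) (hμ0 : 0 < μ) (hμF : μ ≤ Fstar)
    (k : ℝ) (hk1 : 1 ≤ k) (hk2 : k ≤ Real.sqrt (Fintype.card E) / 10)
    (μhat : ℝ) (hμhat : μhat = μ - k * μ / Real.sqrt (Fintype.card E))
    (fμ : E → ℝ) (hfμ : IsCentralFlow B u χst Fstar μ fμ)
    (fh : E → ℝ) (hfh : IsCentralFlow B u χst Fstar μhat fh) :
    ∑ e, (fh e - fμ e) ^ 2 *
        (((u e - fμ e) * (u e - fh e))⁻¹ + ((u e + fμ e) * (u e + fh e))⁻¹) ≤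
      500 * k ^ 2 :=
  central_path_l2_stability_general head tail s t hst u B hB χst hχ hconn Fstar hFstar U P hpre μ
    hμ0 hμF k hk1 hk2 μhat hμhat fμ hfμ fh hfh
end

section
/- Suppose G is preconditioned, μ ∈ (0, F*], 1 ≤ k ≤ √m/10, and μ̂ = μ − kμ/√m. Let φ(μ) and φ(μ̂) be central path potential vectors for f(μ) and f(μ̂) respectively. Then |χ_{st}ᵀ (φ(μ̂) − φ(μ))| ≤ 500 k √m / μ. (Since each central path potential vector is determined up to a global additive constant, the value χ_{st}ᵀ φ(·) = φ(·)_t − φ(·)_s is well defined.) -/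
open Matrix

/-!
Write `D = φ_t - φ_s` and `D̂ = φ̂_t - φ̂_s`. Pairing the optimality condition `Bφ = ψ(f)` (with
`ψ_c(x) = (c - x)⁻¹ - (c + x)⁻¹`) against a maximum flow and a scaled copy of it gives
`|D| ≤ m / μ`; since a preconditioning edge has capacity `2U ≥ μ / m`, this keeps both of its
residual capacities above `μ / (2m)`. The energy `∑ₑ (f̂ₑ - fₑ) ((Bφ̂)ₑ - (Bφ)ₑ)` has nonnegative
terms and equals `(μ - μ̂)(D̂ - D)`, while on each preconditioning edge its term is at least
`(D̂ - D)² μ μ̂ / (8 m²)`. Summing over the at least `m / 2` preconditioning edges yields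
`|D̂ - D| ≤ 16 m (μ - μ̂) / (μ μ̂) = 16 k √m / μ̂`.
-/

lemma abs_le_div_of_mul_sq_le_mul {a b x : ℝ} (ha : 0 < a) (hb : 0 ≤ b)
    (h : a * x ^ 2 ≤ b * x) : |x| ≤ b / a := by
  rw [le_div_iff₀ ha]
  rcases (abs_nonneg x).eq_or_lt with h0 | h0
  · rw [← h0, zero_mul]; exact hb
  · have : a * |x| ^ 2 ≤ b * |x| := by
      rw [sq_abs]; exact h.trans (mul_le_mul_of_nonneg_left (le_abs_self x) hb)
    nlinarith

/-- The derivative of the log barrier `-log (c - x) - log (c + x)`; the central path condition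
reads `B φ = barrierDeriv u f` edgewise. -/
noncomputable def barrierDeriv (c x : ℝ) : ℝ :=
  (c - x)⁻¹ - (c + x)⁻¹

namespace barrierDeriv

variable {c x y q a b : ℝ}

lemma neg_right (c x : ℝ) : barrierDeriv c (-x) = -barrierDeriv c x := by
  unfold barrierDeriv
  rw [sub_neg_eq_add, ← sub_eq_add_neg]
  ring

lemma sub_eq (hx : |x| < c) (hy : |y| < c) :
    barrierDeriv c y - barrierDeriv c x =
      (y - x) * ((c - x)⁻¹ * (c - y)⁻¹ + (c + x)⁻¹ * (c + y)⁻¹) := by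
  obtain ⟨hx₁, hx₂⟩ := abs_lt.mp hx
  obtain ⟨hy₁, hy₂⟩ := abs_lt.mp hy
  have : c - x ≠ 0 := by linarith
  have : c + x ≠ 0 := by linarith
  have : c - y ≠ 0 := by linarith
  have : c + y ≠ 0 := by linarith
  unfold barrierDeriv
  field_simp
  ring

lemma sub_mul_le_one (hx : |x| < c) (hq : |q| ≤ c) : (q - x) * barrierDeriv c x ≤ 1 := by
  obtain ⟨hx₁, hx₂⟩ := abs_lt.mp hx
  obtain ⟨hq₁, hq₂⟩ := abs_le.mp hq
  have : c - x ≠ 0 := by linarith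
  have : c + x ≠ 0 := by linarith
  have hpos : 0 < (c - x) * (c + x) := mul_pos (by linarith) (by linarith)
  have : (q - x) * barrierDeriv c x = 2 * x * (q - x) / ((c - x) * (c + x)) := by
    unfold barrierDeriv
    field_simp
    ring
  rw [this, div_le_one hpos]
  nlinarith [sq_nonneg (x - q), mul_nonneg (sub_nonneg.mpr hq₂) (neg_le_iff_add_nonneg.mp hq₁)]

lemma inv_sub_le (hx : |x| < c) (ha : |barrierDeriv c x| ≤ a) (hca : c⁻¹ ≤ a) :
    (c - x)⁻¹ ≤ 2 * a := by
  obtain ⟨hx₁, hx₂⟩ := abs_lt.mp hx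
  have hc : 0 < c := by linarith
  have : 0 < c⁻¹ := inv_pos.mpr hc
  rcases le_or_gt x 0 with h | h
  · linarith [inv_anti₀ hc (by linarith : c ≤ c - x)]
  · have : (c + x)⁻¹ ≤ c⁻¹ := inv_anti₀ hc (by linarith)
    have : (c - x)⁻¹ = barrierDeriv c x + (c + x)⁻¹ := by unfold barrierDeriv; ring
    linarith [le_abs_self (barrierDeriv c x)]

lemma inv_add_le (hx : |x| < c) (ha : |barrierDeriv c x| ≤ a) (hca : c⁻¹ ≤ a) :
    (c + x)⁻¹ ≤ 2 * a := by
  simpa using inv_sub_le (x := -x) (by rwa [abs_neg]) (by rwa [neg_right, abs_neg]) hca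

lemma sq_sub_le (hx : |x| < c) (hy : |y| < c) (ha : |barrierDeriv c x| ≤ a)
    (hb : |barrierDeriv c y| ≤ b) (hca : c⁻¹ ≤ a) (hcb : c⁻¹ ≤ b) :
    (barrierDeriv c y - barrierDeriv c x) ^ 2 ≤
      8 * a * b * ((y - x) * (barrierDeriv c y - barrierDeriv c x)) := by
  obtain ⟨hx₁, hx₂⟩ := abs_lt.mp hx
  obtain ⟨hy₁, hy₂⟩ := abs_lt.mp hy
  have : 0 < c - x := by linarith
  have : 0 < c + x := by linarith
  have : 0 < c - y := by linarith
  have : 0 < c + y := by linarith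
  set r := (c - x)⁻¹ * (c - y)⁻¹ + (c + x)⁻¹ * (c + y)⁻¹
  have hr : 0 ≤ r := by positivity
  have hr_le : r ≤ 8 * a * b := by
    have ha₀ : 0 ≤ 2 * a := (inv_pos.mpr ‹0 < c - x›).le.trans (inv_sub_le hx ha hca)
    have := mul_le_mul (inv_sub_le hx ha hca) (inv_sub_le hy hb hcb) (by positivity) ha₀
    have := mul_le_mul (inv_add_le hx ha hca) (inv_add_le hy hb hcb) (by positivity) ha₀
    linarith
  rw [sub_eq hx hy]
  calc ((y - x) * r) ^ 2 = (y - x) ^ 2 * r * r := by ring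
    _ ≤ (y - x) ^ 2 * r * (8 * a * b) := by gcongr
    _ = 8 * a * b * ((y - x) * ((y - x) * r)) := by ring

lemma sub_mul_sub_nonneg (hx : |x| < c) (hy : |y| < c) :
    0 ≤ (y - x) * (barrierDeriv c y - barrierDeriv c x) := by
  obtain ⟨hx₁, hx₂⟩ := abs_lt.mp hx
  obtain ⟨hy₁, hy₂⟩ := abs_lt.mp hy
  have : 0 < c - x := by linarith
  have : 0 < c + x := by linarith
  have : 0 < c - y := by linarith
  have : 0 < c + y := by linarith
  rw [sub_eq hx hy, ← mul_assoc]
  exact mul_nonneg (mul_self_nonneg _) (by positivity)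

end barrierDeriv

section Incidence

variable {V E : Type*} [DecidableEq V] {head tail : E → V} {B : Matrix E V ℝ} {χ : V → ℝ}
  {s t : V}

lemma abs_incidence_le_one
    (hB : ∀ e v, B e v = (if v = head e then (1 : ℝ) else 0) - (if v = tail e then 1 else 0))
    (e : E) (v : V) : |B e v| ≤ 1 := by
  rw [hB]
  split_ifs <;> norm_num

lemma incidence_row_eq_or_neg
    (hB : ∀ e v, B e v = (if v = head e then (1 : ℝ) else 0) - (if v = tail e then 1 else 0))
    (hχ : χ = fun v => (if v = t then (1 : ℝ) else 0) - (if v = s then 1 else 0)) {e : E}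
    (he : (head e = s ∧ tail e = t) ∨ (head e = t ∧ tail e = s)) : B e = χ ∨ B e = -χ := by
  rcases he with ⟨hs, ht⟩ | ⟨ht, hs⟩
  · right; ext v; simp only [hB, hχ, hs, ht, Pi.neg_apply]; ring
  · left; ext v; simp only [hB, hχ, hs, ht]

end Incidence

lemma sq_dotProduct_sub_le_of_row_eq_or_neg {V E : Type*} [Fintype V] {B : Matrix E V ℝ}
    {u : E → ℝ} {χ : V → ℝ} {e : E} (he : B e = χ ∨ B e = -χ)
    {f f' : E → ℝ} {p p' : V → ℝ} {a b : ℝ} (hf : |f e| < u e) (hf' : |f' e| < u e)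
    (hp : (B *ᵥ p) e = barrierDeriv (u e) (f e)) (hp' : (B *ᵥ p') e = barrierDeriv (u e) (f' e))
    (ha : |χ ⬝ᵥ p| ≤ a) (hb : |χ ⬝ᵥ p'| ≤ b) (hua : (u e)⁻¹ ≤ a) (hub : (u e)⁻¹ ≤ b) :
    (χ ⬝ᵥ p' - χ ⬝ᵥ p) ^ 2 ≤ 8 * a * b * ((f' e - f e) * ((B *ᵥ p') e - (B *ᵥ p) e)) := by
  have hrow : ∀ q : V → ℝ, |(B *ᵥ q) e| = |χ ⬝ᵥ q| := fun q => by
    rcases he with h | h <;> simp only [mulVec, h, neg_dotProduct, abs_neg]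
  have hsq : ((B *ᵥ p') e - (B *ᵥ p) e) ^ 2 = (χ ⬝ᵥ p' - χ ⬝ᵥ p) ^ 2 := by
    rcases he with h | h
    · simp only [mulVec, h]
    · simp only [mulVec, h, neg_dotProduct]; ring
  have := barrierDeriv.sq_sub_le hf hf' (hp ▸ hrow p ▸ ha) (hp' ▸ hrow p' ▸ hb) hua hub
  rwa [← hp, ← hp', hsq] at this

section Duality

variable {V E : Type*} [Fintype E] {B : Matrix E V ℝ} {u : E → ℝ} {χ : V → ℝ}

lemma le_sum_abs_of_transpose_mulVec_eq_smul {t : V} (hBt : ∀ e, |B e t| ≤ 1) (hχt : χ t = 1)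
    {f : E → ℝ} {F : ℝ} (hf : Bᵀ *ᵥ f = F • χ) : F ≤ ∑ e, |f e| := by
  have hF : F = ∑ e, B e t * f e := by
    simpa [hχt, mulVec, dotProduct] using (congrFun hf t).symm
  rw [hF]
  refine Finset.sum_le_sum fun e _ => ?_
  calc B e t * f e ≤ |B e t| * |f e| := by rw [← abs_mul]; exact le_abs_self _
    _ ≤ |f e| := mul_le_of_le_one_left (abs_nonneg _) (hBt e)

variable [Fintype V]

lemma dotProduct_mulVec_of_transpose_mulVec_eq_smul {x : E → ℝ} {a : ℝ}
    (hx : Bᵀ *ᵥ x = a • χ) (p : V → ℝ) : x ⬝ᵥ (B *ᵥ p) = a * (χ ⬝ᵥ p) := by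
  rw [dotProduct_mulVec, ← mulVec_transpose, hx, smul_dotProduct, smul_eq_mul]

lemma sub_mul_dotProduct_le_card {f q : E → ℝ} {p : V → ℝ} {a b : ℝ}
    (hf : ∀ e, |f e| < u e) (hfv : Bᵀ *ᵥ f = a • χ)
    (hp : ∀ e, (B *ᵥ p) e = barrierDeriv (u e) (f e))
    (hq : ∀ e, |q e| ≤ u e) (hqv : Bᵀ *ᵥ q = b • χ) :
    (b - a) * (χ ⬝ᵥ p) ≤ Fintype.card E := by
  have hqf : Bᵀ *ᵥ (q - f) = (b - a) • χ := by rw [mulVec_sub, hqv, hfv, sub_smul]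
  rw [← dotProduct_mulVec_of_transpose_mulVec_eq_smul hqf]
  calc (q - f) ⬝ᵥ (B *ᵥ p) = ∑ e, (q e - f e) * barrierDeriv (u e) (f e) := by
        simp only [dotProduct, Pi.sub_apply, hp]
    _ ≤ ∑ _e : E, (1 : ℝ) := Finset.sum_le_sum fun e _ => barrierDeriv.sub_mul_le_one (hf e) (hq e)
    _ = Fintype.card E := by simp

/-- Compare `f` with the feasible flows `fs` and `(1 - 2ν/F) • fs`, of values `F` and `F - 2ν`. -/
lemma abs_dotProduct_le_card_div {fs f : E → ℝ} {p : V → ℝ} {F ν : ℝ}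
    (hfs : ∀ e, |fs e| ≤ u e) (hfsv : Bᵀ *ᵥ fs = F • χ) (hν : 0 < ν) (hνF : ν ≤ F)
    (hf : ∀ e, |f e| < u e) (hfv : Bᵀ *ᵥ f = (F - ν) • χ)
    (hp : ∀ e, (B *ᵥ p) e = barrierDeriv (u e) (f e)) :
    |χ ⬝ᵥ p| ≤ Fintype.card E / ν := by
  have hF : 0 < F := hν.trans_le hνF
  set r := 1 - 2 * ν / F with hr_def
  have hr : |r| ≤ 1 := by
    have : 2 * ν / F ≤ 2 := by rw [div_le_iff₀ hF]; linarith
    rw [abs_le]; constructor <;> linarith [div_pos (mul_pos two_pos hν) hF]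
  have hrfs : ∀ e, |(r • fs) e| ≤ u e := fun e => by
    rw [Pi.smul_apply, smul_eq_mul, abs_mul]
    exact (mul_le_of_le_one_left (abs_nonneg _) hr).trans (hfs e)
  have hrfsv : Bᵀ *ᵥ (r • fs) = (F - 2 * ν) • χ := by
    rw [mulVec_smul, hfsv, smul_smul, hr_def]
    congr 1
    field_simp
  have hup := sub_mul_dotProduct_le_card hf hfv hp hfs hfsv
  have hlow := sub_mul_dotProduct_le_card hf hfv hp hrfs hrfsv
  rw [le_div_iff₀ hν, ← abs_of_pos hν, ← abs_mul, abs_le]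
  constructor <;> linarith

lemma sum_sub_mul_mulVec_sub_eq {f f' : E → ℝ} {a a' : ℝ} (hfv : Bᵀ *ᵥ f = a • χ)
    (hf'v : Bᵀ *ᵥ f' = a' • χ) (p p' : V → ℝ) :
    ∑ e, (f' e - f e) * ((B *ᵥ p') e - (B *ᵥ p) e) = (a' - a) * (χ ⬝ᵥ p' - χ ⬝ᵥ p) := by
  have hv : Bᵀ *ᵥ (f' - f) = (a' - a) • χ := by rw [mulVec_sub, hfv, hf'v, sub_smul]
  rw [← dotProduct_sub, ← dotProduct_mulVec_of_transpose_mulVec_eq_smul hv, mulVec_sub]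
  rfl

theorem abs_dotProduct_sub_le_of_parallel_edges {P : Finset E} (hP : P.Nonempty) {c : ℝ}
    (hPu : ∀ e ∈ P, u e = c) (hPB : ∀ e ∈ P, B e = χ ∨ B e = -χ)
    {fs : E → ℝ} {F : ℝ} (hfs : ∀ e, |fs e| ≤ u e) (hfsv : Bᵀ *ᵥ fs = F • χ)
    {ν ν' : ℝ} (hν' : 0 < ν') (hν'ν : ν' ≤ ν) (hνF : ν ≤ F) (hνc : ν ≤ c * Fintype.card E)
    {f f' : E → ℝ} {p p' : V → ℝ}
    (hf : ∀ e, |f e| < u e) (hfv : Bᵀ *ᵥ f = (F - ν) • χ)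
    (hp : ∀ e, (B *ᵥ p) e = barrierDeriv (u e) (f e))
    (hf' : ∀ e, |f' e| < u e) (hf'v : Bᵀ *ᵥ f' = (F - ν') • χ)
    (hp' : ∀ e, (B *ᵥ p') e = barrierDeriv (u e) (f' e)) :
    |χ ⬝ᵥ p' - χ ⬝ᵥ p| ≤ 8 * Fintype.card E ^ 2 * (ν - ν') / (ν * ν' * P.card) := by
  set m : ℝ := (Fintype.card E : ℝ)
  set δ := χ ⬝ᵥ p' - χ ⬝ᵥ p
  set energy : E → ℝ := fun e => (f' e - f e) * ((B *ᵥ p') e - (B *ᵥ p) e)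
  have hν : 0 < ν := hν'.trans_le hν'ν
  obtain ⟨e₀, he₀⟩ := hP
  have hc : 0 < c := hPu e₀ he₀ ▸ (abs_nonneg _).trans_lt (hf e₀)
  have hm : 0 < m := pos_of_mul_pos_right (hν.trans_le hνc) hc.le
  have hcν : c⁻¹ ≤ m / ν := by
    rw [inv_le_iff_one_le_mul₀ hc, div_mul_eq_mul_div, one_le_div hν]; linarith
  have hcν' : c⁻¹ ≤ m / ν' := hcν.trans (div_le_div_of_nonneg_left hm.le hν' hν'ν)
  have hD := abs_dotProduct_le_card_div hfs hfsv hν hνF hf hfv hp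
  have hD' := abs_dotProduct_le_card_div hfs hfsv hν' (hν'ν.trans hνF) hf' hf'v hp'
  have henergy_nonneg : ∀ e, 0 ≤ energy e := fun e => by
    simp only [energy, hp, hp']
    exact barrierDeriv.sub_mul_sub_nonneg (hf e) (hf' e)
  have hedge : ∀ e ∈ P, δ ^ 2 ≤ 8 * (m / ν) * (m / ν') * energy e := fun e he =>
    sq_dotProduct_sub_le_of_row_eq_or_neg (hPB e he) (hf e) (hf' e) (hp e) (hp' e) hD hD'
      (hPu e he ▸ hcν) (hPu e he ▸ hcν')
  have hK : 0 ≤ 8 * (m / ν) * (m / ν') := by positivity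
  have hsum : (P.card : ℝ) * δ ^ 2 ≤ 8 * (m / ν) * (m / ν') * (ν - ν') * δ := by
    calc (P.card : ℝ) * δ ^ 2 = ∑ e ∈ P, δ ^ 2 := by simp
      _ ≤ ∑ e ∈ P, 8 * (m / ν) * (m / ν') * energy e := Finset.sum_le_sum hedge
      _ ≤ ∑ e, 8 * (m / ν) * (m / ν') * energy e :=
        Finset.sum_le_sum_of_subset_of_nonneg (Finset.subset_univ P)
          fun e _ _ => mul_nonneg hK (henergy_nonneg e)
      _ = _ := by rw [← Finset.mul_sum, sum_sub_mul_mulVec_sub_eq hfv hf'v]; ring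
  calc |δ| ≤ 8 * (m / ν) * (m / ν') * (ν - ν') / P.card :=
        abs_le_div_of_mul_sq_le_mul (by exact_mod_cast Finset.card_pos.mpr ⟨e₀, he₀⟩)
          (mul_nonneg hK (sub_nonneg.mpr hν'ν)) hsum
    _ = _ := by field_simp

end Duality

lemma short_step_bounds {m k μ : ℝ} (hk1 : 1 ≤ k) (hk2 : k ≤ √m / 10) (hμ : 0 < μ) :
    9 / 10 * μ ≤ μ - k * μ / √m ∧ μ - k * μ / √m < μ := by
  have hr : 0 < √m := by linarith
  have hstep : k * μ / √m ≤ μ / 10 := by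
    rw [div_le_div_iff₀ hr (by norm_num)]; nlinarith
  exact ⟨by linarith, by linarith [div_pos (mul_pos (by linarith : 0 < k) hμ) hr]⟩

lemma short_step_drop_bound {m p k μ μ' : ℝ} (hk1 : 1 ≤ k) (hk2 : k ≤ √m / 10) (hμ : 0 < μ)
    (hμ' : μ' = μ - k * μ / √m) (hp : m ≤ 2 * p) :
    8 * m ^ 2 * (μ - μ') / (μ * μ' * p) ≤ 500 * k * √m / μ := by
  obtain ⟨hμ'₉, -⟩ := hμ' ▸ short_step_bounds hk1 hk2 hμ
  set r := √m
  have hr : 10 ≤ r := by linarith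
  have hm : m = r ^ 2 := (Real.sq_sqrt (Real.sqrt_pos.mp (by linarith)).le).symm
  have hp₀ : 0 < p := by nlinarith
  have hμ'₀ : 0 < μ' := by linarith
  have hden : 9 / 10 * μ * (r ^ 2 / 2) ≤ μ' * p :=
    mul_le_mul hμ'₉ (by linarith) (by positivity) hμ'₀.le
  calc 8 * m ^ 2 * (μ - μ') / (μ * μ' * p) = 8 * k * r ^ 3 / (μ' * p) := by
        rw [hμ', hm]; field_simp; ring
    _ ≤ 8 * k * r ^ 3 / (9 / 10 * μ * (r ^ 2 / 2)) := by gcongr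
    _ = 160 / 9 * k * r / μ := by field_simp; ring
    _ ≤ 500 * k * r / μ := by gcongr; norm_num

theorem central_path_potential_drop_general {V E : Type*} [Fintype V] [Fintype E] [DecidableEq V]
    (head tail : E → V) (s t : V) (hst : s ≠ t)
    (u : E → ℝ)
    (B : Matrix E V ℝ)
    (hB : ∀ e v, B e v = (if v = head e then (1 : ℝ) else 0) - (if v = tail e then 1 else 0))
    (χst : V → ℝ)
    (hχ : χst = fun v => (if v = t then (1 : ℝ) else 0) - (if v = s then 1 else 0))
    (Fstar : ℝ)
    (hFstar : IsGreatest
      {F : ℝ | ∃ f : E → ℝ, (∀ e, |f e| ≤ u e) ∧ Bᵀ *ᵥ f = F • χst} Fstar)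
    (U : ℝ) (P : Finset E) (hpre : Preconditioned head tail s t u U P)
    (μ : ℝ) (hμ0 : 0 < μ) (hμF : μ ≤ Fstar)
    (k : ℝ) (hk1 : 1 ≤ k) (hk2 : k ≤ Real.sqrt (Fintype.card E) / 10)
    (μhat : ℝ) (hμhat : μhat = μ - k * μ / Real.sqrt (Fintype.card E))
    (fμ : E → ℝ) (hfμ : IsCentralFlow B u χst Fstar μ fμ)
    (fh : E → ℝ) (hfh : IsCentralFlow B u χst Fstar μhat fh)
    (φ : V → ℝ) (hφ : ∀ e, (B *ᵥ φ) e = (u e - fμ e)⁻¹ - (u e + fμ e)⁻¹)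
    (φh : V → ℝ) (hφh : ∀ e, (B *ᵥ φh) e = (u e - fh e)⁻¹ - (u e + fh e)⁻¹) :
    |χst ⬝ᵥ (φh - φ)| ≤ 500 * k * Real.sqrt (Fintype.card E) / μ := by
  obtain ⟨hU, hPst, hPcap, hcard⟩ := hpre
  obtain ⟨hμhat₉, hμhatμ⟩ := hμhat ▸ short_step_bounds hk1 hk2 hμ0
  obtain ⟨fs, hfs, hfsv⟩ := hFstar.1
  have hm : 0 < Fintype.card E := by
    exact_mod_cast Real.sqrt_pos.mp (by linarith : (0 : ℝ) < √(Fintype.card E))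
  have hP : P.Nonempty := Finset.card_pos.mp (by omega)
  have hFstar_le : Fstar ≤ 2 * U * Fintype.card E :=
    calc Fstar ≤ ∑ e, |fs e| := le_sum_abs_of_transpose_mulVec_eq_smul
          (abs_incidence_le_one hB · t) (by simp [hχ, hst.symm]) hfsv
      _ ≤ ∑ _e : E, 2 * U := Finset.sum_le_sum fun e _ => (hfs e).trans <| by
          by_cases he : e ∈ P
          · exact (hPst e he).1.le
          · linarith [hPcap e he]
      _ = 2 * U * Fintype.card E := by simp [mul_comm]
  rw [dotProduct_sub]
  calc _ ≤ 8 * (Fintype.card E : ℝ) ^ 2 * (μ - μhat) / (μ * μhat * P.card) :=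
        abs_dotProduct_sub_le_of_parallel_edges hP (fun e he => (hPst e he).1)
          (fun e he => incidence_row_eq_or_neg hB hχ (hPst e he).2) hfs hfsv
          (by linarith) hμhatμ.le hμF (hμF.trans hFstar_le) hfμ.1 hfμ.2.1 hφ hfh.1 hfh.2.1 hφh
    _ ≤ _ := short_step_drop_bound hk1 hk2 hμ0 hμhat (by exact_mod_cast hcard)

/-- for `μ̂ = μ − kμ/√m` with `1 ≤ k ≤ √m/10`, the `s`-`t` voltage drop
of the central path potentials changes by at most `500 k √m / μ`:
`|χ_{st}ᵀ (φ(μ̂) − φ(μ))| ≤ 500 k √m / μ`. -/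
theorem central_path_potential_drop {V E : Type*} [Fintype V] [Fintype E] [DecidableEq V]
    [DecidableEq E]
    (head tail : E → V) (s t : V) (hst : s ≠ t)
    (u : E → ℝ) (hu : ∀ e, 0 < u e)
    (B : Matrix E V ℝ)
    (hB : ∀ e v, B e v = (if v = head e then (1 : ℝ) else 0) - (if v = tail e then 1 else 0))
    (χst : V → ℝ)
    (hχ : χst = fun v => (if v = t then (1 : ℝ) else 0) - (if v = s then 1 else 0))
    (hconn : ∀ x : V → ℝ, (∀ e, x (head e) = x (tail e)) → ∀ v w : V, x v = x w)
    (Fstar : ℝ)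
    (hFstar : IsGreatest
      {F : ℝ | ∃ f : E → ℝ, (∀ e, |f e| ≤ u e) ∧ Bᵀ *ᵥ f = F • χst} Fstar)
    (U : ℝ) (P : Finset E) (hpre : Preconditioned head tail s t u U P)
    (μ : ℝ) (hμ0 : 0 < μ) (hμF : μ ≤ Fstar)
    (k : ℝ) (hk1 : 1 ≤ k) (hk2 : k ≤ Real.sqrt (Fintype.card E) / 10)
    (μhat : ℝ) (hμhat : μhat = μ - k * μ / Real.sqrt (Fintype.card E))
    (fμ : E → ℝ) (hfμ : IsCentralFlow B u χst Fstar μ fμ)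
    (fh : E → ℝ) (hfh : IsCentralFlow B u χst Fstar μhat fh)
    (φ : V → ℝ) (hφ : ∀ e, (B *ᵥ φ) e = (u e - fμ e)⁻¹ - (u e + fμ e)⁻¹)
    (φh : V → ℝ) (hφh : ∀ e, (B *ᵥ φh) e = (u e - fh e)⁻¹ - (u e + fh e)⁻¹) :
    |χst ⬝ᵥ (φh - φ)| ≤ 500 * k * Real.sqrt (Fintype.card E) / μ :=
  central_path_potential_drop_general head tail s t hst u B hB χst hχ Fstar hFstar U P hpre μ hμ0
    hμF k hk1 hk2 μhat hμhat fμ hfμ fh hfh φ hφ φh hφh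
end

section
/- Let f be a strictly feasible flow, let f̃ ∈ ℝ^E, let e be an edge, and let 0 < ε < 1/2 satisfy r(f)_e^{1/2} · |f_e − f̃_e| ≤ ε. Then |f̃_e| < u_e (so r(f̃)_e is defined), and (1 + ε)^{−2} · r(f)_e ≤ r(f̃)_e ≤ (1 − ε)^{−2} · r(f)_e. -/
lemma inv_le_sqrt_inv_sq_add {a c : ℝ} (ha : 0 < a) (hc : 0 ≤ c) :
    a⁻¹ ≤ √((a ^ 2)⁻¹ + c) := by
  calc a⁻¹ = √((a ^ 2)⁻¹) := by rw [Real.sqrt_inv, Real.sqrt_sq ha.le]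
    _ ≤ √((a ^ 2)⁻¹ + c) := Real.sqrt_le_sqrt (le_add_of_nonneg_right hc)

lemma le_mul_of_inv_le_of_mul_le {a s d ε : ℝ} (ha : 0 < a) (hd : 0 ≤ d)
    (has : a⁻¹ ≤ s) (h : s * d ≤ ε) : d ≤ ε * a := by
  have : a⁻¹ * d ≤ ε := (mul_le_mul_of_nonneg_right has hd).trans h
  rwa [inv_mul_le_iff₀ ha, mul_comm] at this

lemma inv_sq_bounds_of_abs_sub_le {a a' ε : ℝ} (ha : 0 < a) (hε : ε < 1)
    (h : |a' - a| ≤ ε * a) :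
    0 < a' ∧ ((1 + ε) ^ 2)⁻¹ * (a ^ 2)⁻¹ ≤ (a' ^ 2)⁻¹ ∧
      (a' ^ 2)⁻¹ ≤ ((1 - ε) ^ 2)⁻¹ * (a ^ 2)⁻¹ := by
  obtain ⟨hle, hge⟩ := abs_sub_le_iff.mp h
  have hlow : 0 < (1 - ε) * a := mul_pos (by linarith) ha
  have ha' : 0 < a' := by linarith
  refine ⟨ha', ?_, ?_⟩
  · rw [← mul_inv, ← mul_pow]
    exact inv_anti₀ (by positivity) (pow_le_pow_left₀ ha'.le (by linarith) 2)
  · rw [← mul_inv, ← mul_pow]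
    exact inv_anti₀ (by positivity) (pow_le_pow_left₀ hlow.le (by linarith) 2)

theorem resistance_multiplicative_stability_general {E : Type*}
    (u : E → ℝ)
    (f : E → ℝ) (hfeas : ∀ e, |f e| < u e)
    (ft : E → ℝ) (e : E)
    (ε : ℝ) (hε : ε < 1 / 2)
    (h : Real.sqrt (resist u f e) * |f e - ft e| ≤ ε) :
    |ft e| < u e ∧
      ((1 + ε) ^ 2)⁻¹ * resist u f e ≤ resist u ft e ∧
      resist u ft e ≤ ((1 - ε) ^ 2)⁻¹ * resist u f e := by
  obtain ⟨hneg, hpos⟩ := abs_lt.mp (hfeas e)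
  have hminus : 0 < u e - f e := by linarith
  have hplus : 0 < u e + f e := by linarith
  have hε1 : ε < 1 := by linarith
  have hd := abs_nonneg (f e - ft e)
  have hrminus : (u e - f e)⁻¹ ≤ √(resist u f e) :=
    inv_le_sqrt_inv_sq_add hminus (inv_nonneg.2 (sq_nonneg _))
  have hrplus : (u e + f e)⁻¹ ≤ √(resist u f e) := by
    rw [resist, add_comm ((u e - f e) ^ 2)⁻¹]
    exact inv_le_sqrt_inv_sq_add hplus (inv_nonneg.2 (sq_nonneg _))
  have hdminus := le_mul_of_inv_le_of_mul_le hminus hd hrminus h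
  have hdplus := le_mul_of_inv_le_of_mul_le hplus hd hrplus h
  obtain ⟨hmt, hm₁, hm₂⟩ := inv_sq_bounds_of_abs_sub_le hminus hε1
    (a' := u e - ft e) (by rwa [sub_sub_sub_cancel_left])
  obtain ⟨hpt, hp₁, hp₂⟩ := inv_sq_bounds_of_abs_sub_le hplus hε1
    (a' := u e + ft e) (by rwa [add_sub_add_left_eq_sub, abs_sub_comm])
  refine ⟨abs_lt.mpr ⟨by linarith, by linarith⟩, ?_, ?_⟩ <;>
    · simp only [resist, mul_add]
      linarith

/-- if `f` is strictly feasible and `r(f)_e^{1/2} |f_e − f̃_e| ≤ ε` for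
some `0 < ε < 1/2`, then `|f̃_e| < u_e` and
`(1+ε)⁻² r(f)_e ≤ r(f̃)_e ≤ (1−ε)⁻² r(f)_e`. -/
theorem resistance_multiplicative_stability {E : Type*} [Fintype E]
    (u : E → ℝ) (hu : ∀ e, 0 < u e)
    (f : E → ℝ) (hfeas : ∀ e, |f e| < u e)
    (ft : E → ℝ) (e : E)
    (ε : ℝ) (hε0 : 0 < ε) (hε : ε < 1 / 2)
    (h : Real.sqrt (resist u f e) * |f e - ft e| ≤ ε) :
    |ft e| < u e ∧
      ((1 + ε) ^ 2)⁻¹ * resist u f e ≤ resist u ft e ∧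
      resist u ft e ≤ ((1 - ε) ^ 2)⁻¹ * resist u f e :=
  resistance_multiplicative_stability_general u f hfeas ft e ε hε h
end
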